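/- arXiv:0812.1804 — 7 statements merged into one kernel-verified Lean document; each statement's English description precedes it below -/
import Mathlib

section
/- Let n and k be positive integers with k < n and let Σ̂ be an n×n symmetric positive definite real matrix. Then there exist a matrix H* ∈ ℝ^{n×k} and a diagonal positive semidefinite matrix D* ∈ ℝ^{n×n} with H*H*ᵀ + D* positive definite, such that for every H ∈ ℝ^{n×k} and every diagonal positive semidefinite D ∈ ℝ^{n×n} with HHᵀ + D positive definite, one has I(Σ̂ ‖ H*H*ᵀ + D*) ≤ I(Σ̂ ‖ HHᵀ + D). -/
open Matrix

/-- I-divergence between two positive definite matrices (covariances of zero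
mean normal laws): `I(Σ₁‖Σ₂) = ½ log(det Σ₂/det Σ₁) − m/2 + ½ tr(Σ₂⁻¹ Σ₁)`. -/
noncomputable def Idiv {ι : Type} [Fintype ι] [DecidableEq ι]
    (S1 S2 : Matrix ι ι ℝ) : ℝ :=
  (1 / 2) * Real.log (S2.det / S1.det) - (Fintype.card ι : ℝ) / 2
    + (1 / 2) * (S2⁻¹ * S1).trace

lemma Idiv_eq_formula {m : ℕ} (S1 S2 : Matrix (Fin m) (Fin m) ℝ) :
    Idiv S1 S2 = (1/2) * Real.log (S2.det / S1.det) - (m:ℝ)/2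
      + (1/2) * ((S2.det)⁻¹ * ((S2.adjugate * S1).trace)) := by
  unfold Idiv
  rw [Fintype.card_fin]
  congr 2
  rw [Matrix.inv_def, Ring.inverse_eq_inv', Matrix.smul_mul, trace_smul, smul_eq_mul]
section spec
variable {A : Matrix (Fin n) (Fin n) ℝ}


section spec


lemma trace_eq_sum_eig {A : Matrix (Fin n) (Fin n) ℝ} (hA : A.IsHermitian) :
    A.trace = ∑ i, hA.eigenvalues i := by
  conv_lhs => rw [hA.spectral_theorem]
  rw [Unitary.conjStarAlgAut_apply, Matrix.trace_mul_cycle]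
  simp [Matrix.trace_diagonal]

lemma star_mul_self_unit (hA : A.IsHermitian) :
    (star (hA.eigenvectorUnitary : Matrix (Fin n) (Fin n) ℝ)) * (hA.eigenvectorUnitary : Matrix (Fin n) (Fin n) ℝ) = 1 :=
  (Unitary.mem_iff.mp hA.eigenvectorUnitary.2).1

lemma inv_spec (hA : A.PosDef) :
    A⁻¹ = (hA.1.eigenvectorUnitary : Matrix (Fin n) (Fin n) ℝ) *
      diagonal (fun i => (hA.1.eigenvalues i)⁻¹) *
      (star (hA.1.eigenvectorUnitary : Matrix (Fin n) (Fin n) ℝ)) := by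
  apply Matrix.inv_eq_right_inv
  nth_rewrite 1 [hA.1.spectral_theorem]
  rw [Unitary.conjStarAlgAut_apply]
  set U := (hA.1.eigenvectorUnitary : Matrix (Fin n) (Fin n) ℝ)
  have h1 : star U * U = 1 := star_mul_self_unit hA.1
  have h2 : U * star U = 1 := (Unitary.mem_iff.mp hA.1.eigenvectorUnitary.2).2
  have hdd' : diagonal (RCLike.ofReal ∘ hA.1.eigenvalues) *
      diagonal (fun i => (hA.1.eigenvalues i)⁻¹) = (1 : Matrix (Fin n) (Fin n) ℝ) := by
    rw [diagonal_mul_diagonal]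
    convert diagonal_one using 2
    funext i
    exact mul_inv_cancel₀ (hA.eigenvalues_pos i).ne'
  have step : U * diagonal (RCLike.ofReal ∘ hA.1.eigenvalues) * star U *
      (U * diagonal (fun i => (hA.1.eigenvalues i)⁻¹) * star U)
      = U * (diagonal (RCLike.ofReal ∘ hA.1.eigenvalues) * (star U * U) *
        diagonal (fun i => (hA.1.eigenvalues i)⁻¹)) * star U := by
    simp only [mul_assoc]
  rw [step, h1, mul_one, hdd', mul_one, h2]

lemma trace_inv_eq (hA : A.PosDef) : A⁻¹.trace = ∑ i, (hA.1.eigenvalues i)⁻¹ := by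
  rw [inv_spec hA, Matrix.trace_mul_cycle, star_mul_self_unit hA.1, one_mul, Matrix.trace_diagonal]

lemma shift_psd (hA : A.IsHermitian) {δ : ℝ} (h : ∀ i, δ ≤ hA.eigenvalues i) :
    (A - δ • (1 : Matrix (Fin n) (Fin n) ℝ)).PosSemidef := by
  set U := (hA.eigenvectorUnitary : Matrix (Fin n) (Fin n) ℝ)
  have h2 : U * star U = 1 := (Unitary.mem_iff.mp hA.eigenvectorUnitary.2).2
  have key : A - δ • (1 : Matrix (Fin n) (Fin n) ℝ)
      = U * diagonal (fun i => hA.eigenvalues i - δ) * Uᴴ := by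
    conv_lhs => rw [hA.spectral_theorem, Unitary.conjStarAlgAut_apply]
    have : δ • (1 : Matrix (Fin n) (Fin n) ℝ) = U * (δ • (1 : Matrix (Fin n) (Fin n) ℝ)) * star U := by
      rw [Matrix.mul_smul, mul_one, Matrix.smul_mul, h2]
    rw [this, ← Matrix.star_eq_conjTranspose]
    rw [← Matrix.sub_mul, ← Matrix.mul_sub]
    congr 1
    rw [← diagonal_one, smul_eq_diagonal_mul]
    rw [diagonal_mul_diagonal, diagonal_sub]
    congr 1
    funext i
    simp [RCLike.ofReal]
  rw [key]
  exact (posSemidef_diagonal_iff.mpr (fun i => by linarith [h i])).mul_mul_conjTranspose_same U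


lemma psd_diag_nonneg {M : Matrix (Fin n) (Fin n) ℝ} (hM : M.PosSemidef) (i : Fin n) :
    0 ≤ M i i := by
  have := (posSemidef_iff_dotProduct_mulVec.mp hM).2 (Pi.single i 1)
  simpa [dotProduct, mulVec, Pi.single_apply, Finset.sum_ite_eq] using this

lemma psd_trace_nonneg {M : Matrix (Fin n) (Fin n) ℝ} (hM : M.PosSemidef) :
    0 ≤ M.trace := Finset.sum_nonneg fun i _ => psd_diag_nonneg hM i

lemma psd_diag_le_trace {M : Matrix (Fin n) (Fin n) ℝ} (hM : M.PosSemidef) (i : Fin n) :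
    M i i ≤ M.trace :=
  Finset.single_le_sum (fun j _ => psd_diag_nonneg hM j) (Finset.mem_univ i)

open scoped MatrixOrder in
lemma trace_mul_psd_nonneg {A B : Matrix (Fin n) (Fin n) ℝ}
    (hA : A.PosSemidef) (hB : B.PosSemidef) : 0 ≤ (A * B).trace := by
  obtain ⟨C, hC⟩ := CStarAlgebra.nonneg_iff_eq_star_mul_self.mp hB.nonneg
  rw [hC, ← mul_assoc, Matrix.trace_mul_cycle]
  have : (C * A * Cᴴ).PosSemidef := hA.mul_mul_conjTranspose_same C
  exact psd_trace_nonneg this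

lemma scalar_low {ε lam : ℝ} (hε : 0 < ε) (hlam : 0 < lam) :
    1 + Real.log ε ≤ Real.log lam + ε / lam := by
  have h := Real.log_le_sub_one_of_pos (div_pos hε hlam)
  rw [Real.log_div hε.ne' hlam.ne'] at h
  linarith

lemma scalar_up {ε lam c : ℝ} (hε : 0 < ε) (hlam : 0 < lam)
    (h : Real.log lam + ε / lam ≤ c) : lam ≤ Real.exp c := by
  have h2 : Real.log lam ≤ c := by
    have : 0 < ε / lam := div_pos hε hlam
    linarith
  calc lam = Real.exp (Real.log lam) := (Real.exp_log hlam).symm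
    _ ≤ Real.exp c := Real.exp_le_exp.mpr h2

lemma scalar_dn {ε lam c : ℝ} (hε : 0 < ε) (hlam : 0 < lam)
    (h : Real.log lam + ε / lam ≤ c) :
    min 1 ((ε / (max c 0 + 2))^2) ≤ lam := by
  rcases le_or_gt 1 lam with h1 | h1
  · exact le_trans (min_le_left _ _) h1
  · refine le_trans (min_le_right _ _) ?_
    set t : ℝ := (Real.sqrt lam)⁻¹ with ht
    have hs : 0 < Real.sqrt lam := Real.sqrt_pos.mpr hlam
    have hts : 0 < t := inv_pos.mpr hs
    have hs1 : Real.sqrt lam < 1 := by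
      nlinarith [Real.sq_sqrt hlam.le, Real.sqrt_nonneg lam]
    have ht1 : 1 ≤ t := (one_le_inv₀ hs).mpr hs1.le
    have hlamt : lam = (t⁻¹)^2 := by
      rw [ht, inv_inv, Real.sq_sqrt hlam.le]
    -- log lam ≥ 2 - 2t
    have hlog : 2 - 2*t ≤ Real.log lam := by
      have h3 := Real.log_le_sub_one_of_pos hts
      have h4 : Real.log t = - Real.log (Real.sqrt lam) := by
        rw [ht, Real.log_inv]
      have h5 : Real.log (Real.sqrt lam) = Real.log lam / 2 := Real.log_sqrt hlam.le
      rw [h4, h5] at h3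
      linarith
    have hεt : ε / lam = ε * t^2 := by
      rw [hlamt]; field_simp
    -- ε t^2 ≤ (max c 0 + 2) * t
    have hq : ε * t^2 ≤ (max c 0 + 2) * t := by
      have hc : Real.log lam + ε/lam ≤ max c 0 := le_trans h (le_max_left _ _)
      rw [hεt] at hc
      nlinarith [le_max_right c 0, mul_le_mul_of_nonneg_left ht1 (le_max_right c 0)]
    have hT : 0 < max c 0 + 2 := by positivity
    have htle : t ≤ (max c 0 + 2) / ε := by
      rw [le_div_iff₀ hε]
      nlinarith
    have : ε / (max c 0 + 2) ≤ t⁻¹ := by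
      rw [div_le_iff₀ hT]
      have htε : t * ε ≤ max c 0 + 2 := by
        rw [le_div_iff₀ hε] at htle; linarith
      calc ε = t⁻¹ * (t * ε) := by field_simp
        _ ≤ t⁻¹ * (max c 0 + 2) := mul_le_mul_of_nonneg_left htε (by positivity)
    rw [hlamt]
    have h0 : 0 ≤ ε / (max c 0 + 2) := by positivity
    exact pow_le_pow_left₀ h0 this 2

lemma pd_of_shift {n : ℕ} {A : Matrix (Fin n) (Fin n) ℝ} (hA : A.IsHermitian) {δ : ℝ} (hδ : 0 < δ)
    (h : (A - δ • (1 : Matrix (Fin n) (Fin n) ℝ)).PosSemidef) : A.PosDef := by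
  refine posDef_iff_dotProduct_mulVec.mpr ⟨hA, fun x hx => ?_⟩
  have h1 := (posSemidef_iff_dotProduct_mulVec.mp h).2 x
  have h2 : star x ⬝ᵥ (A - δ • (1 : Matrix (Fin n) (Fin n) ℝ)) *ᵥ x
      = star x ⬝ᵥ A *ᵥ x - δ * (x ⬝ᵥ x) := by
    rw [Matrix.sub_mulVec, dotProduct_sub, Matrix.smul_mulVec, Matrix.one_mulVec]
    simp [dotProduct_smul, star_trivial]
  rw [h2] at h1
  have h3 : 0 < x ⬝ᵥ x := by
    have hne : ∃ i, x i ≠ 0 := by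
      by_contra hc
      push_neg at hc
      exact hx (funext hc)
    obtain ⟨i, hi⟩ := hne
    have : (0:ℝ) < ∑ j, x j * x j := by
      apply Finset.sum_pos' (fun j _ => mul_self_nonneg _)
      exact ⟨i, Finset.mem_univ i, mul_self_pos.mpr hi⟩
    simpa [dotProduct] using this
  have : 0 < δ * (x ⬝ᵥ x) := mul_pos hδ h3
  simp only [star_trivial] at h1 ⊢
  linarith

lemma log_det_eq (hA : A.PosDef) : Real.log A.det = ∑ i, Real.log (hA.1.eigenvalues i) := by
  have h1 : A.det = ∏ i, hA.1.eigenvalues i := by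
    have := hA.1.det_eq_prod_eigenvalues
    simpa using this
  rw [h1]
  exact Real.log_prod (fun i _ => (hA.eigenvalues_pos i).ne')

lemma eig_bound {ε c : ℝ} (hε : 0 < ε) {S : Matrix (Fin n) (Fin n) ℝ} (hS : S.PosDef)
    (hb : Real.log S.det + ε * S⁻¹.trace ≤ c) (j : Fin n) :
    Real.log (hS.1.eigenvalues j) + ε / hS.1.eigenvalues j ≤ c - ((n:ℝ)-1)*(1+Real.log ε) := by
  set f : Fin n → ℝ := fun i => Real.log (hS.1.eigenvalues i) + ε / hS.1.eigenvalues i with hf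
  have hsum : ∑ i, f i ≤ c := by
    have h1 : ∑ i, f i = Real.log S.det + ε * S⁻¹.trace := by
      rw [log_det_eq hS, trace_inv_eq hS, Finset.mul_sum, ← Finset.sum_add_distrib]
      exact Finset.sum_congr rfl (fun i _ => by simp only [hf, div_eq_mul_inv])
    rw [h1]; exact hb
  have hlow : ∀ i, 1 + Real.log ε ≤ f i := fun i => scalar_low hε (hS.eigenvalues_pos i)
  have hcard : ((Finset.univ.erase j).card : ℝ) = (n:ℝ) - 1 := by
    rw [Finset.card_erase_of_mem (Finset.mem_univ j)]
    simp only [Finset.card_univ, Fintype.card_fin]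
    have hn : 1 ≤ n := Nat.one_le_iff_ne_zero.mpr (by rintro rfl; exact absurd j.2 (by simp))
    push_cast [Nat.cast_sub hn]
    ring
  have hrest : ((n:ℝ)-1) * (1 + Real.log ε) ≤ ∑ i ∈ Finset.univ.erase j, f i := by
    rw [← hcard]
    calc ((Finset.univ.erase j).card : ℝ) * (1 + Real.log ε)
        = ∑ _i ∈ Finset.univ.erase j, (1 + Real.log ε) := by
          rw [Finset.sum_const, nsmul_eq_mul]
      _ ≤ ∑ i ∈ Finset.univ.erase j, f i :=
          Finset.sum_le_sum (fun i _ => hlow i)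
  have hsplit : f j + ∑ i ∈ Finset.univ.erase j, f i = ∑ i, f i :=
    Finset.add_sum_erase _ f (Finset.mem_univ j)
  have : f j ≤ c - ((n:ℝ)-1)*(1+Real.log ε) := by linarith
  exact this
variable {n : ℕ} {X : Type*} [TopologicalSpace X]

lemma isClosed_isDiag_comp {g : X → Matrix (Fin n) (Fin n) ℝ} (hg : Continuous g) :
    IsClosed {x | (g x).IsDiag} := by
  have : {x | (g x).IsDiag} = ⋂ (i : Fin n), ⋂ (j : Fin n), {x | i ≠ j → g x i j = 0} := by
    ext x; simp [Matrix.IsDiag]; tauto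
  rw [this]
  refine isClosed_iInter fun i => isClosed_iInter fun j => ?_
  by_cases hij : i = j
  · simp [hij]
  · have : {x | i ≠ j → g x i j = 0} = {x | g x i j = 0} := by ext x; simp [hij]
    rw [this]
    exact isClosed_eq (((continuous_apply j).comp ((continuous_apply i).comp hg))) continuous_const

lemma isClosed_psd_comp {g : X → Matrix (Fin n) (Fin n) ℝ} (hg : Continuous g) :
    IsClosed {x | (g x).PosSemidef} := by
  have : {x | (g x).PosSemidef} =
      {x | (g x)ᴴ = g x} ∩ ⋂ (v : Fin n → ℝ), {x | 0 ≤ star v ⬝ᵥ (g x) *ᵥ v} := by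
    ext x
    simp only [Set.mem_setOf_eq, Set.mem_inter_iff, Set.mem_iInter]
    exact posSemidef_iff_dotProduct_mulVec
  rw [this]
  refine (isClosed_eq hg.matrix_conjTranspose hg).inter (isClosed_iInter fun v => ?_)
  exact isClosed_le continuous_const (continuous_const.dotProduct (hg.matrix_mulVec continuous_const))

lemma compact_entries {m k : ℕ} (a b : ℝ) :
    IsCompact {M : Matrix (Fin m) (Fin k) ℝ | ∀ i j, M i j ∈ Set.Icc a b} := by
  have : {M : Matrix (Fin m) (Fin k) ℝ | ∀ i j, M i j ∈ Set.Icc a b} =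
      Set.univ.pi (fun _ : Fin m => Set.univ.pi fun _ : Fin k => Set.Icc a b) := by
    ext M
    constructor
    · intro h i _ j _
      exact h i j
    · intro h i j
      exact h i (Set.mem_univ i) j (Set.mem_univ j)
  rw [this]
  exact isCompact_univ_pi fun i => isCompact_univ_pi fun j => isCompact_Icc

set_option maxHeartbeats 1000000 in
theorem stmt_0 (n k : ℕ) (hk : 0 < k) (hkn : k < n)
    (Shat : Matrix (Fin n) (Fin n) ℝ) (hShat : Shat.PosDef) :
    ∃ (Hstar : Matrix (Fin n) (Fin k) ℝ) (Dstar : Matrix (Fin n) (Fin n) ℝ),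
      Dstar.IsDiag ∧ Dstar.PosSemidef ∧ (Hstar * Hstarᵀ + Dstar).PosDef ∧
      ∀ (H : Matrix (Fin n) (Fin k) ℝ) (D : Matrix (Fin n) (Fin n) ℝ),
        D.IsDiag → D.PosSemidef → (H * Hᵀ + D).PosDef →
        Idiv Shat (Hstar * Hstarᵀ + Dstar) ≤ Idiv Shat (H * Hᵀ + D) := by
  classical
  have hn : 0 < n := hk.trans hkn
  have j0 : Fin n := ⟨0, hn⟩
  -- smallest eigenvalue of Shat
  obtain ⟨i0, -, hi0⟩ := Finset.exists_min_image Finset.univ hShat.1.eigenvalues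
    ⟨j0, Finset.mem_univ j0⟩
  set ε : ℝ := hShat.1.eigenvalues i0 with hεdef
  have hε : 0 < ε := hShat.eigenvalues_pos i0
  have hSε : (Shat - ε • (1 : Matrix (Fin n) (Fin n) ℝ)).PosSemidef :=
    shift_psd hShat.1 (fun i => hi0 i (Finset.mem_univ i))
  set c0 : ℝ := Idiv Shat (1 : Matrix (Fin n) (Fin n) ℝ) with hc0def
  set c : ℝ := 2*c0 + n + Real.log Shat.det with hcdef
  set c1 : ℝ := c - ((n:ℝ)-1)*(1+Real.log ε) with hc1def
  set δ : ℝ := min 1 ((ε/(max c1 0+2))^2) with hδdef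
  have hδpos : 0 < δ := lt_min one_pos (by positivity)
  set R : ℝ := max 1 ((n:ℝ) * Real.exp c1) with hRdef
  have hR1 : (1:ℝ) ≤ R := le_max_left _ _
  set Sig : (Matrix (Fin n) (Fin k) ℝ × Matrix (Fin n) (Fin n) ℝ) → Matrix (Fin n) (Fin n) ℝ :=
    fun p => p.1 * p.1ᵀ + p.2 with hSigdef
  set f : (Matrix (Fin n) (Fin k) ℝ × Matrix (Fin n) (Fin n) ℝ) → ℝ :=
    fun p => Idiv Shat (Sig p) with hfdef
  have hdetS : 0 < Shat.det := hShat.det_pos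
  -- coercivity
  have hkey : ∀ p : Matrix (Fin n) (Fin k) ℝ × Matrix (Fin n) (Fin n) ℝ,
      p.2.IsDiag → p.2.PosSemidef → (Sig p).PosDef → f p ≤ c0 →
      ((Sig p) - δ • (1 : Matrix (Fin n) (Fin n) ℝ)).PosSemidef ∧
        (∀ i j, (p.1 i j)^2 ≤ R) ∧ (∀ i j, |p.2 i j| ≤ R) := by
    intro p hdiag hDpsd hPD hfle
    have hdet : 0 < (Sig p).det := hPD.det_pos
    have htr : ε * (Sig p)⁻¹.trace ≤ ((Sig p)⁻¹ * Shat).trace := by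
      have h1 : 0 ≤ ((Sig p)⁻¹ * (Shat - ε • (1 : Matrix (Fin n) (Fin n) ℝ))).trace :=
        trace_mul_psd_nonneg hPD.inv.posSemidef hSε
      have h2 : (Sig p)⁻¹ * (Shat - ε • (1 : Matrix (Fin n) (Fin n) ℝ))
          = (Sig p)⁻¹ * Shat - ε • (Sig p)⁻¹ := by
        rw [Matrix.mul_sub]
        congr 1
        rw [Matrix.mul_smul, mul_one]
      rw [h2, trace_sub, trace_smul, smul_eq_mul] at h1
      linarith
    have hb : Real.log (Sig p).det + ε * (Sig p)⁻¹.trace ≤ c := by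
      have hIdiv : f p = (1/2) * Real.log ((Sig p).det / Shat.det) - (n:ℝ)/2
          + (1/2)*(((Sig p)⁻¹ * Shat).trace) := by
        simp only [hfdef, Idiv, Fintype.card_fin]
      rw [Real.log_div hdet.ne' hdetS.ne'] at hIdiv
      rw [hIdiv] at hfle
      rw [hcdef]
      linarith
    have hev : ∀ i, Real.log (hPD.1.eigenvalues i) + ε / hPD.1.eigenvalues i ≤ c1 := by
      intro i
      rw [hc1def]
      exact eig_bound hε hPD hb i
    have hup : ∀ i, hPD.1.eigenvalues i ≤ Real.exp c1 :=
      fun i => scalar_up hε (hPD.eigenvalues_pos i) (hev i)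
    have hdn : ∀ i, δ ≤ hPD.1.eigenvalues i := by
      intro i
      rw [hδdef]
      exact scalar_dn hε (hPD.eigenvalues_pos i) (hev i)
    have htrS : (Sig p).trace ≤ R := by
      rw [trace_eq_sum_eig hPD.1]
      calc ∑ i, hPD.1.eigenvalues i ≤ ∑ _i : Fin n, Real.exp c1 :=
            Finset.sum_le_sum (fun i _ => hup i)
        _ = (n:ℝ) * Real.exp c1 := by
            rw [Finset.sum_const, nsmul_eq_mul, Finset.card_univ, Fintype.card_fin]
        _ ≤ R := le_max_right _ _
    have hHH : (p.1 * p.1ᵀ).PosSemidef := by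
      have h := Matrix.posSemidef_self_mul_conjTranspose p.1
      rwa [conjTranspose_eq_transpose_of_trivial] at h
    have hsplitTr : (p.1*p.1ᵀ).trace + p.2.trace = (Sig p).trace := by
      rw [hSigdef, trace_add]
    have htrD0 : 0 ≤ p.2.trace := psd_trace_nonneg hDpsd
    have htrH0 : 0 ≤ (p.1*p.1ᵀ).trace := psd_trace_nonneg hHH
    refine ⟨shift_psd hPD.1 hdn, ?_, ?_⟩
    · intro i j
      have hdiagH : (p.1*p.1ᵀ) i i = ∑ l, (p.1 i l)^2 := by
        simp [Matrix.mul_apply, transpose_apply, pow_two]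
      have h1 : (p.1 i j)^2 ≤ (p.1*p.1ᵀ) i i := by
        rw [hdiagH]
        exact Finset.single_le_sum (f := fun l => (p.1 i l)^2) (fun l _ => sq_nonneg _) (Finset.mem_univ j)
      have h2 := psd_diag_le_trace hHH i
      linarith
    · intro i j
      by_cases hij : i = j
      · subst hij
        rw [abs_of_nonneg (psd_diag_nonneg hDpsd i)]
        have := psd_diag_le_trace hDpsd i
        linarith
      · rw [hdiag hij, abs_zero]
        linarith
  -- the compact set
  set K0 : Set (Matrix (Fin n) (Fin k) ℝ × Matrix (Fin n) (Fin n) ℝ) :=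
    {p | p.2.IsDiag ∧ p.2.PosSemidef ∧
      ((Sig p) - δ • (1 : Matrix (Fin n) (Fin n) ℝ)).PosSemidef ∧
      (∀ i j, (p.1 i j)^2 ≤ R) ∧ (∀ i j, |p.2 i j| ≤ R)} with hK0def
  set K : Set (Matrix (Fin n) (Fin k) ℝ × Matrix (Fin n) (Fin n) ℝ) :=
    K0 ∩ f ⁻¹' (Set.Iic c0) with hKdef
  have hSigcont : Continuous Sig :=
    (continuous_fst.matrix_mul continuous_fst.matrix_transpose).add continuous_snd
  -- positive definiteness on K0
  have hK0pd : ∀ p ∈ K0, (Sig p).PosDef := by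
    intro p hp
    have hherm : (Sig p).IsHermitian := by
      have h1 : (p.1 * p.1ᵀ).PosSemidef := by
        have h := Matrix.posSemidef_self_mul_conjTranspose p.1
        rwa [conjTranspose_eq_transpose_of_trivial] at h
      exact h1.1.add hp.2.1.1
    exact pd_of_shift hherm hδpos hp.2.2.1
  -- K0 is closed
  have hK0closed : IsClosed K0 := by
    have h1 := isClosed_isDiag_comp (n := n) (continuous_snd :
      Continuous fun p : Matrix (Fin n) (Fin k) ℝ × Matrix (Fin n) (Fin n) ℝ => p.2)
    have h2 := isClosed_psd_comp (n := n) (continuous_snd :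
      Continuous fun p : Matrix (Fin n) (Fin k) ℝ × Matrix (Fin n) (Fin n) ℝ => p.2)
    have h3 := isClosed_psd_comp (n := n) (hSigcont.sub continuous_const :
      Continuous fun p => Sig p - δ • (1 : Matrix (Fin n) (Fin n) ℝ))
    have h4 : IsClosed {p : Matrix (Fin n) (Fin k) ℝ × Matrix (Fin n) (Fin n) ℝ |
        ∀ i j, (p.1 i j)^2 ≤ R} := by
      have he : {p : Matrix (Fin n) (Fin k) ℝ × Matrix (Fin n) (Fin n) ℝ | ∀ i j, (p.1 i j)^2 ≤ R}
          = ⋂ (i : Fin n), ⋂ (j : Fin k), {p : Matrix (Fin n) (Fin k) ℝ ×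
            Matrix (Fin n) (Fin n) ℝ | (p.1 i j)^2 ≤ R} := by
        ext p; simp
      rw [he]
      exact isClosed_iInter fun i => isClosed_iInter fun j =>
        isClosed_le (((continuous_apply j).comp ((continuous_apply i).comp
          continuous_fst)).pow 2) continuous_const
    have h5 : IsClosed {p : Matrix (Fin n) (Fin k) ℝ × Matrix (Fin n) (Fin n) ℝ |
        ∀ i j, |p.2 i j| ≤ R} := by
      have he : {p : Matrix (Fin n) (Fin k) ℝ × Matrix (Fin n) (Fin n) ℝ | ∀ i j, |p.2 i j| ≤ R}
          = ⋂ (i : Fin n), ⋂ (j : Fin n), {p : Matrix (Fin n) (Fin k) ℝ ×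
            Matrix (Fin n) (Fin n) ℝ | |p.2 i j| ≤ R} := by
        ext p; simp
      rw [he]
      exact isClosed_iInter fun i => isClosed_iInter fun j =>
        isClosed_le (((continuous_apply j).comp ((continuous_apply i).comp
          continuous_snd)).abs) continuous_const
    have he : K0 = {p | p.2.IsDiag} ∩ ({p | p.2.PosSemidef} ∩ ({p |
          ((Sig p) - δ • (1 : Matrix (Fin n) (Fin n) ℝ)).PosSemidef} ∩
          ({p | ∀ i j, (p.1 i j)^2 ≤ R} ∩ {p | ∀ i j, |p.2 i j| ≤ R}))) := by
      rw [hK0def]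
      ext p
      simp only [Set.mem_setOf_eq, Set.mem_inter_iff]
    rw [he]
    exact h1.inter (h2.inter (h3.inter (h4.inter h5)))
  -- continuity of f on K0
  have hfcontOn : ContinuousOn f K0 := by
    have hdetc : Continuous fun q => (Sig q).det := hSigcont.matrix_det
    have htrc : Continuous fun q => (((Sig q).adjugate * Shat).trace) :=
      (hSigcont.matrix_adjugate.matrix_mul continuous_const).matrix_trace
    have hform : ∀ q, f q = (1/2) * Real.log ((Sig q).det / Shat.det) - (n:ℝ)/2
        + (1/2) * (((Sig q).det)⁻¹ * (((Sig q).adjugate * Shat).trace)) := by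
      intro q
      rw [hfdef]
      exact Idiv_eq_formula Shat (Sig q)
    have hcont2 : ContinuousOn (fun q => (1/2) * Real.log ((Sig q).det / Shat.det) - (n:ℝ)/2
        + (1/2) * (((Sig q).det)⁻¹ * (((Sig q).adjugate * Shat).trace))) K0 := by
      intro q hq
      have hdet : 0 < (Sig q).det := (hK0pd q hq).det_pos
      apply ContinuousAt.continuousWithinAt
      have hlog : ContinuousAt (fun q => Real.log ((Sig q).det / Shat.det)) q := by
        have hne : (Sig q).det / Shat.det ≠ 0 := by positivity
        exact ContinuousAt.comp (g := Real.log) (f := fun q => (Sig q).det / Shat.det)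
          (Real.continuousAt_log hne) ((hdetc.div_const _).continuousAt)
      have hinv : ContinuousAt (fun q => ((Sig q).det)⁻¹) q :=
        hdetc.continuousAt.inv₀ hdet.ne'
      exact ((continuousAt_const.mul hlog).sub continuousAt_const).add
        (continuousAt_const.mul (hinv.mul htrc.continuousAt))
    exact hcont2.congr (fun q _ => hform q)
  -- K is closed and compact
  have hKclosed : IsClosed K := by
    rw [hKdef]
    exact hfcontOn.preimage_isClosed_of_isClosed hK0closed isClosed_Iic
  have hBcomp : IsCompact ({M : Matrix (Fin n) (Fin k) ℝ |
        ∀ i j, M i j ∈ Set.Icc (-(Real.sqrt R)) (Real.sqrt R)} ×ˢ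
      {M : Matrix (Fin n) (Fin n) ℝ | ∀ i j, M i j ∈ Set.Icc (-R) R}) :=
    (compact_entries _ _).prod (compact_entries _ _)
  have hKsub : K ⊆ {M : Matrix (Fin n) (Fin k) ℝ |
        ∀ i j, M i j ∈ Set.Icc (-(Real.sqrt R)) (Real.sqrt R)} ×ˢ
      {M : Matrix (Fin n) (Fin n) ℝ | ∀ i j, M i j ∈ Set.Icc (-R) R} := by
    rintro p ⟨hp0, -⟩
    constructor
    · intro i j
      rw [Set.mem_Icc, ← abs_le, ← Real.sqrt_sq_eq_abs]
      exact Real.sqrt_le_sqrt (hp0.2.2.2.1 i j)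
    · intro i j
      rw [Set.mem_Icc, ← abs_le]
      exact hp0.2.2.2.2 i j
  have hKcomp : IsCompact K := hBcomp.of_isClosed_subset hKclosed hKsub
  -- the base point (0, 1)
  have hδ1 : δ ≤ 1 := min_le_left _ _
  have hSig01 : Sig ((0 : Matrix (Fin n) (Fin k) ℝ), (1 : Matrix (Fin n) (Fin n) ℝ)) = 1 := by
    rw [hSigdef]
    simp
  have hone : (1 : Matrix (Fin n) (Fin n) ℝ).PosSemidef := by
    rw [← Matrix.diagonal_one]
    exact Matrix.PosSemidef.diagonal (fun i => zero_le_one)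
  have hshift01 : ((1 : Matrix (Fin n) (Fin n) ℝ) - δ • (1 : Matrix (Fin n) (Fin n) ℝ)).PosSemidef := by
    have he : (1 : Matrix (Fin n) (Fin n) ℝ) - δ • (1 : Matrix (Fin n) (Fin n) ℝ)
        = diagonal (fun _ : Fin n => 1 - δ) := by
      ext i j
      by_cases h : i = j
      · subst h; simp
      · simp [Matrix.one_apply, Matrix.diagonal_apply, h]
    rw [he]
    exact Matrix.PosSemidef.diagonal (fun i => by simp; linarith)
  have h01 : ((0 : Matrix (Fin n) (Fin k) ℝ), (1 : Matrix (Fin n) (Fin n) ℝ)) ∈ K := by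
    refine ⟨⟨Matrix.isDiag_one, hone, ?_, ?_, ?_⟩, ?_⟩
    · rw [show Sig ((0 : Matrix (Fin n) (Fin k) ℝ), (1 : Matrix (Fin n) (Fin n) ℝ)) = 1 from hSig01]
      exact hshift01
    · intro i j
      show ((0 : Matrix (Fin n) (Fin k) ℝ) i j)^2 ≤ R
      simp only [Matrix.zero_apply]
      nlinarith [hR1]
    · intro i j
      show |(1 : Matrix (Fin n) (Fin n) ℝ) i j| ≤ R
      rw [Matrix.one_apply]
      by_cases hij : i = j <;> simp [hij] <;> linarith
    · show f _ ≤ c0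
      rw [hfdef]
      simp only [hSig01]
      rw [hc0def]
  -- minimize
  obtain ⟨p0, hp0K, hmin⟩ := hKcomp.exists_isMinOn
    ⟨((0 : Matrix (Fin n) (Fin k) ℝ), (1 : Matrix (Fin n) (Fin n) ℝ)), h01⟩
    (hfcontOn.mono (by rw [hKdef]; exact Set.inter_subset_left))
  refine ⟨p0.1, p0.2, hp0K.1.1, hp0K.1.2.1, ?_, ?_⟩
  · exact hK0pd p0 hp0K.1
  · intro H D hDdiag hDpsd hHD
    rcases le_or_gt (Idiv Shat (H * Hᵀ + D)) c0 with hle | hlt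
    · have hSigHD : Sig (H, D) = H * Hᵀ + D := rfl
      have hfHD : f (H, D) = Idiv Shat (H * Hᵀ + D) := rfl
      have hk' := hkey (H, D) hDdiag hDpsd (by rw [hSigHD]; exact hHD)
        (by rw [hfHD]; exact hle)
      have hmem : (H, D) ∈ K :=
        ⟨⟨hDdiag, hDpsd, hk'.1, hk'.2.1, hk'.2.2⟩, by rw [Set.mem_preimage, Set.mem_Iic, hfHD]; exact hle⟩
      exact isMinOn_iff.mp hmin (H, D) hmem
    · have h1 : f p0 ≤ c0 := hp0K.2
      calc Idiv Shat (p0.1 * p0.1ᵀ + p0.2) = f p0 := rfl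
        _ ≤ c0 := h1
        _ ≤ Idiv Shat (H * Hᵀ + D) := hlt.le
end spec
end spec
end

section
/- Let Σ be an (n+k)×(n+k) symmetric positive definite matrix with blocks Σ₁₁, Σ₁₂, Σ₂₁, Σ₂₂, and let Σ̂ be an n×n symmetric positive definite matrix. Define Σ* as the block matrix with (1,1)-block Σ̂, (1,2)-block Σ̂·Σ₁₁⁻¹·Σ₁₂, (2,1)-block Σ₂₁·Σ₁₁⁻¹·Σ̂, and (2,2)-block Σ₂₂ − Σ₂₁·Σ₁₁⁻¹·(Σ₁₁ − Σ̂)·Σ₁₁⁻¹·Σ₁₂. Then: (i) Σ* is symmetric positive definite; (ii) I(Σ* ‖ Σ) = I(Σ̂ ‖ Σ₁₁); (iii) for every symmetric positive definite (n+k)×(n+k) matrix Σ₀ whose (1,1)-block equals Σ̂, the Pythagorean rule I(Σ₀ ‖ Σ) = I(Σ₀ ‖ Σ*) + I(Σ* ‖ Σ) holds; consequently Σ* minimizes I(Σ₀ ‖ Σ) over all such Σ₀. -/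
open Matrix

set_option linter.unusedSectionVars false

namespace IdivAux

variable {p q : Type} [Fintype p] [Fintype q] [DecidableEq p] [DecidableEq q]

lemma trace_fromBlocks' (A : Matrix p p ℝ) (B : Matrix p q ℝ) (C : Matrix q p ℝ)
    (D : Matrix q q ℝ) : (fromBlocks A B C D).trace = A.trace + D.trace := by
  simp [Matrix.trace, Fintype.sum_sum_type, fromBlocks]

lemma posDef_conj {A : Matrix p p ℝ} (hA : A.PosDef) {B : Matrix p p ℝ} (hB : IsUnit B.det) :
    (B * A * Bᴴ).PosDef := by
  refine PosDef.of_dotProduct_mulVec_pos (isHermitian_mul_mul_conjTranspose _ hA.1) fun x hx => ?_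
  have hBH : IsUnit (Bᴴ).det := by
    rw [det_conjTranspose]; simpa using hB
  have hx' : Bᴴ *ᵥ x ≠ 0 := by
    intro h
    apply hx
    have h2 : (Bᴴ)⁻¹ *ᵥ (Bᴴ *ᵥ x) = 0 := by rw [h, mulVec_zero]
    rwa [mulVec_mulVec, Matrix.nonsing_inv_mul _ hBH, one_mulVec] at h2
  have key : star x ⬝ᵥ (B * A * Bᴴ) *ᵥ x = star (Bᴴ *ᵥ x) ⬝ᵥ A *ᵥ (Bᴴ *ᵥ x) := by
    rw [star_mulVec, conjTranspose_conjTranspose, mulVec_mulVec, dotProduct_mulVec,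
      dotProduct_mulVec, vecMul_vecMul, ← Matrix.mul_assoc]
  rw [key]
  exact hA.dotProduct_mulVec_pos hx'

lemma posDef_toBlocks₁₁ {M : Matrix (p ⊕ q) (p ⊕ q) ℝ} (hM : M.PosDef) :
    M.toBlocks₁₁.PosDef := by
  refine PosDef.of_dotProduct_mulVec_pos ?_ ?_
  · ext i j
    simpa [toBlocks₁₁, conjTranspose_apply] using
      congrFun (congrFun hM.1 (Sum.inl i)) (Sum.inl j)
  · intro x hx
    have hy : Sum.elim x (0 : q → ℝ) ≠ 0 := fun h => hx (funext fun i => congrFun h (Sum.inl i))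
    have h2 := hM.dotProduct_mulVec_pos hy
    rw [← fromBlocks_toBlocks M] at h2
    simpa [fromBlocks_mulVec, Function.star_sumElim, sumElim_dotProduct_sumElim] using h2

lemma posDef_toBlocks₂₂ {M : Matrix (p ⊕ q) (p ⊕ q) ℝ} (hM : M.PosDef) :
    M.toBlocks₂₂.PosDef := by
  refine PosDef.of_dotProduct_mulVec_pos ?_ ?_
  · ext i j
    simpa [toBlocks₂₂, conjTranspose_apply] using
      congrFun (congrFun hM.1 (Sum.inr i)) (Sum.inr j)
  · intro x hx
    have hy : Sum.elim (0 : p → ℝ) x ≠ 0 := fun h => hx (funext fun i => congrFun h (Sum.inr i))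
    have h2 := hM.dotProduct_mulVec_pos hy
    rw [← fromBlocks_toBlocks M] at h2
    simpa [fromBlocks_mulVec, Function.star_sumElim, sumElim_dotProduct_sumElim] using h2

lemma posDef_fromBlocks_diag {A : Matrix p p ℝ} {D : Matrix q q ℝ}
    (hA : A.PosDef) (hD : D.PosDef) : (fromBlocks A 0 0 D).PosDef := by
  refine PosDef.of_dotProduct_mulVec_pos ?_ ?_
  · have : (fromBlocks A (0 : Matrix p q ℝ) (0 : Matrix q p ℝ) D)ᴴ = fromBlocks A 0 0 D := by
      rw [fromBlocks_conjTranspose, hA.1.eq, hD.1.eq]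
      simp
    exact this
  · intro x hx
    have hx' : x = Sum.elim (x ∘ Sum.inl) (x ∘ Sum.inr) := (Sum.elim_comp_inl_inr x).symm
    rw [hx']
    simp only [fromBlocks_mulVec, Function.star_sumElim, sumElim_dotProduct_sumElim,
      zero_mulVec, add_zero, zero_add, mulVec_zero]
    rcases eq_or_ne (x ∘ Sum.inl) 0 with h1 | h1
    · have h2 : x ∘ Sum.inr ≠ 0 := by
        intro h2; apply hx; rw [hx', h1, h2]; exact Sum.elim_zero_zero
      exact add_pos_of_nonneg_of_pos (hA.posSemidef.dotProduct_mulVec_nonneg _) (hD.dotProduct_mulVec_pos h2)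
    · exact add_pos_of_pos_of_nonneg (hA.dotProduct_mulVec_pos h1) (hD.posSemidef.dotProduct_mulVec_nonneg _)

lemma trace_eq_sum_eigenvalues {A : Matrix p p ℝ} (hA : A.IsHermitian) :
    A.trace = ∑ i, hA.eigenvalues i := by
  conv_lhs => rw [hA.spectral_theorem]
  rw [Unitary.conjStarAlgAut_apply, Matrix.trace_mul_cycle, Unitary.coe_star_mul_self, Matrix.one_mul,
    trace_diagonal]
  simp

lemma Idiv_nonneg {ι : Type} [Fintype ι] [DecidableEq ι] {A B : Matrix ι ι ℝ}
    (hA : A.PosDef) (hB : B.PosDef) : 0 ≤ Idiv A B := by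
  have hBi : (B⁻¹).PosDef := hB.inv
  open scoped MatrixOrder in set R := CFC.sqrt (B⁻¹) with hRdef
  have hRps : R.PosSemidef := by open scoped MatrixOrder in exact (CFC.sqrt_nonneg (B⁻¹)).posSemidef
  have hRR : R * R = B⁻¹ := by open scoped MatrixOrder in exact CFC.sqrt_mul_sqrt_self _ hBi.posSemidef.nonneg
  have hdetR : IsUnit R.det := by
    have h2 : R.det * R.det = (B⁻¹).det := by rw [← det_mul, hRR]
    refine isUnit_iff_ne_zero.mpr fun h => hBi.det_pos.ne' ?_
    rw [← h2, h, mul_zero]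
  have hM : (R * A * R).PosDef := by
    have h := posDef_conj hA hdetR
    rwa [hRps.1.eq] at h
  set M := R * A * R with hMdef
  have hMh : M.IsHermitian := hM.1
  have heig : ∀ i, 0 < hM.1.eigenvalues i := fun i => hM.eigenvalues_pos i
  have htrace : M.trace = ∑ i, hM.1.eigenvalues i := trace_eq_sum_eigenvalues hM.1
  have htr2 : (B⁻¹ * A).trace = M.trace := by
    rw [← hRR, Matrix.mul_assoc, Matrix.trace_mul_comm]
  have hAd : A.det ≠ 0 := hA.det_pos.ne'
  have hBd : B.det ≠ 0 := hB.det_pos.ne'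
  have hdet2 : M.det = (B.det)⁻¹ * A.det := by
    have h3 : R.det * R.det = (B.det)⁻¹ := by rw [← det_mul, hRR, det_nonsing_inv, Ring.inverse_eq_inv]
    rw [hMdef, det_mul, det_mul, ← h3]; ring
  have hdet : M.det = ∏ i, hM.1.eigenvalues i := by
    have h := hM.1.det_eq_prod_eigenvalues
    simpa using h
  have hlog : Real.log (B.det / A.det) = - Real.log M.det := by
    rw [hdet2, Real.log_mul (inv_ne_zero hBd) hAd, Real.log_inv, Real.log_div hBd hAd]; ring
  have hMdetlog : Real.log M.det = ∑ i, Real.log (hM.1.eigenvalues i) := by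
    rw [hdet]
    exact Real.log_prod fun i _ => (heig i).ne'
  rw [Idiv, hlog, hMdetlog, htr2, htrace]
  have hcard : (Fintype.card ι : ℝ) = ∑ _i : ι, (1 : ℝ) := by simp
  have key : ∑ i, Real.log (hM.1.eigenvalues i) ≤ ∑ i, (hM.1.eigenvalues i - 1) :=
    Finset.sum_le_sum fun i _ => Real.log_le_sub_one_of_pos (heig i)
  rw [Finset.sum_sub_distrib] at key
  rw [hcard]
  linarith

end IdivAux

open IdivAux in
theorem stmt_2 (n k : ℕ)
    (S : Matrix (Fin n ⊕ Fin k) (Fin n ⊕ Fin k) ℝ) (hS : S.PosDef)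
    (Shat : Matrix (Fin n) (Fin n) ℝ) (hShat : Shat.PosDef)
    (S11 : Matrix (Fin n) (Fin n) ℝ) (hS11 : S11 = S.toBlocks₁₁)
    (S12 : Matrix (Fin n) (Fin k) ℝ) (hS12 : S12 = S.toBlocks₁₂)
    (S21 : Matrix (Fin k) (Fin n) ℝ) (hS21 : S21 = S.toBlocks₂₁)
    (S22 : Matrix (Fin k) (Fin k) ℝ) (hS22 : S22 = S.toBlocks₂₂)
    (Sstar : Matrix (Fin n ⊕ Fin k) (Fin n ⊕ Fin k) ℝ)
    (hSstar : Sstar = fromBlocks Shat (Shat * S11⁻¹ * S12) (S21 * S11⁻¹ * Shat)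
      (S22 - S21 * S11⁻¹ * (S11 - Shat) * S11⁻¹ * S12)) :
    Sstar.PosDef ∧
    Idiv Sstar S = Idiv Shat S11 ∧
    ∀ S0 : Matrix (Fin n ⊕ Fin k) (Fin n ⊕ Fin k) ℝ, S0.PosDef →
      S0.toBlocks₁₁ = Shat →
      Idiv S0 S = Idiv S0 Sstar + Idiv Sstar S ∧
      Idiv Sstar S ≤ Idiv S0 S := by
  -- block structure of S
  have hs : S = fromBlocks S11 S12 S21 S22 := by
    rw [hS11, hS12, hS21, hS22, fromBlocks_toBlocks]
  have hherm : Sᴴ = S := hS.1.eq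
  have h21 : S12ᴴ = S21 := by
    have h := hherm
    rw [hs, fromBlocks_conjTranspose] at h
    simpa using congrArg Matrix.toBlocks₂₁ h
  have h21' : S21ᴴ = S12 := by rw [← h21, conjTranspose_conjTranspose]
  have hS11pd : S11.PosDef := hS11 ▸ posDef_toBlocks₁₁ hS
  have h11h : S11ᴴ = S11 := hS11pd.1.eq
  have hdS11 : IsUnit S11.det := isUnit_iff_ne_zero.mpr hS11pd.det_pos.ne'
  haveI : Invertible S11 := S11.invertibleOfIsUnitDet hdS11
  have hdShat : IsUnit Shat.det := isUnit_iff_ne_zero.mpr hShat.det_pos.ne'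
  set Ssc : Matrix (Fin k) (Fin k) ℝ := S22 - S21 * S11⁻¹ * S12 with hSscdef
  set L : Matrix (Fin n ⊕ Fin k) (Fin n ⊕ Fin k) ℝ := fromBlocks 1 0 (S21 * S11⁻¹) 1 with hLdef
  have hU : Lᴴ = fromBlocks 1 (S11⁻¹ * S12) 0 1 := by
    rw [hLdef, fromBlocks_conjTranspose, conjTranspose_mul, conjTranspose_nonsing_inv,
      h11h, h21']
    simp
  -- factorizations
  have hfact : S = L * fromBlocks S11 0 0 Ssc * Lᴴ := by
    have h := fromBlocks_eq_of_invertible₁₁ S11 S12 S21 S22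
    rw [invOf_eq_nonsing_inv] at h
    rw [hs, h, hU, hLdef]
  have hinvcl : ∀ X : Matrix (Fin n) (Fin k) ℝ, S11 * (S11⁻¹ * X) = X := fun X => by
    rw [← Matrix.mul_assoc, Matrix.mul_nonsing_inv _ hdS11, Matrix.one_mul]
  have hb22 : S22 - S21 * S11⁻¹ * (S11 - Shat) * S11⁻¹ * S12
      = S21 * S11⁻¹ * Shat * (S11⁻¹ * S12) + Ssc := by
    rw [hSscdef]
    simp only [Matrix.mul_sub, Matrix.sub_mul, Matrix.mul_assoc, hinvcl]
    abel
  have hfactstar : Sstar = L * fromBlocks Shat 0 0 Ssc * Lᴴ := by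
    rw [hSstar, hb22, hU, hLdef, fromBlocks_multiply, fromBlocks_multiply]
    simp [Matrix.mul_assoc]
  -- invertibility of L
  have hdetL : L.det = 1 := by
    rw [hLdef, det_fromBlocks_zero₁₂]; simp
  have hdetLH : (Lᴴ).det = 1 := by rw [det_conjTranspose, hdetL]; simp
  have hdL : IsUnit L.det := by rw [hdetL]; exact isUnit_one
  have hdLH : IsUnit (Lᴴ).det := by rw [hdetLH]; exact isUnit_one
  have hLleft : L⁻¹ * L = 1 := Matrix.nonsing_inv_mul _ hdL
  have hUright : Lᴴ * (Lᴴ)⁻¹ = 1 := Matrix.mul_nonsing_inv _ hdLH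
  have hLinv : L⁻¹ = fromBlocks 1 0 (-(S21 * S11⁻¹)) 1 := by
    refine inv_eq_right_inv ?_
    rw [hLdef, fromBlocks_multiply]
    simpa using fromBlocks_one.symm ▸ (by simp : fromBlocks (1 : Matrix (Fin n) (Fin n) ℝ) 0
      (S21 * S11⁻¹ * 1 + 1 * -(S21 * S11⁻¹)) (1 : Matrix (Fin k) (Fin k) ℝ) = fromBlocks 1 0 0 1)
  have hUinv : (Lᴴ)⁻¹ = fromBlocks 1 (-(S11⁻¹ * S12)) 0 1 := by
    refine inv_eq_right_inv ?_
    rw [hU, fromBlocks_multiply]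
    simp [fromBlocks_one]
  -- Schur complement is positive definite
  have hD1pd : (fromBlocks S11 0 0 Ssc).PosDef := by
    have hkey : L⁻¹ * S * (L⁻¹)ᴴ = fromBlocks S11 0 0 Ssc := by
      rw [conjTranspose_nonsing_inv, hfact]
      simp only [← Matrix.mul_assoc]
      rw [hLleft, Matrix.one_mul, Matrix.mul_assoc, hUright, Matrix.mul_one]
    have hdLi : IsUnit (L⁻¹).det := by
      rw [det_nonsing_inv, hdetL]; simp
    have := posDef_conj hS hdLi
    rwa [hkey] at this
  have hSscpd : Ssc.PosDef := by
    have h := posDef_toBlocks₂₂ hD1pd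
    simpa [toBlocks_fromBlocks₂₂] using h
  have hdSsc : IsUnit Ssc.det := isUnit_iff_ne_zero.mpr hSscpd.det_pos.ne'
  -- inverses of block diagonal matrices
  have hdiaginv : ∀ (P : Matrix (Fin n) (Fin n) ℝ) (Q : Matrix (Fin k) (Fin k) ℝ),
      IsUnit P.det → IsUnit Q.det →
      (fromBlocks P 0 0 Q)⁻¹ = fromBlocks P⁻¹ 0 0 Q⁻¹ := by
    intro P Q hP hQ
    refine inv_eq_right_inv ?_
    rw [fromBlocks_multiply]
    simp [Matrix.mul_nonsing_inv _ hP, Matrix.mul_nonsing_inv _ hQ, fromBlocks_one]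
  -- inverses of S and Sstar
  have hSinv : S⁻¹ = (Lᴴ)⁻¹ * (fromBlocks S11⁻¹ 0 0 Ssc⁻¹ * L⁻¹) := by
    rw [hfact, Matrix.mul_inv_rev, Matrix.mul_inv_rev, hdiaginv _ _ hdS11 hdSsc]
  have hSstarinv : Sstar⁻¹ = (Lᴴ)⁻¹ * (fromBlocks Shat⁻¹ 0 0 Ssc⁻¹ * L⁻¹) := by
    rw [hfactstar, Matrix.mul_inv_rev, Matrix.mul_inv_rev, hdiaginv _ _ hdShat hdSsc]
  -- general trace formula
  have htr : ∀ (P : Matrix (Fin n) (Fin n) ℝ) (Q : Matrix (Fin k) (Fin k) ℝ)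
      (X : Matrix (Fin n ⊕ Fin k) (Fin n ⊕ Fin k) ℝ),
      ((Lᴴ)⁻¹ * (fromBlocks P 0 0 Q * L⁻¹) * X).trace
        = (P * (L⁻¹ * X * (Lᴴ)⁻¹).toBlocks₁₁).trace
          + (Q * (L⁻¹ * X * (Lᴴ)⁻¹).toBlocks₂₂).trace := by
    intro P Q X
    have e1 : (Lᴴ)⁻¹ * (fromBlocks P 0 0 Q * L⁻¹) * X
        = (Lᴴ)⁻¹ * (fromBlocks P 0 0 Q * (L⁻¹ * X)) := by
      simp only [Matrix.mul_assoc]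
    rw [e1, Matrix.trace_mul_comm]
    have e2 : fromBlocks P 0 0 Q * (L⁻¹ * X) * (Lᴴ)⁻¹
        = fromBlocks P 0 0 Q * (L⁻¹ * X * (Lᴴ)⁻¹) := by
      simp only [Matrix.mul_assoc]
    rw [e2]
    conv_lhs => rw [← fromBlocks_toBlocks (L⁻¹ * X * (Lᴴ)⁻¹), fromBlocks_multiply]
    rw [trace_fromBlocks']
    simp
  -- the conjugated Sstar is the block diagonal
  have hYstar : L⁻¹ * Sstar * (Lᴴ)⁻¹ = fromBlocks Shat 0 0 Ssc := by
    rw [hfactstar]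
    simp only [← Matrix.mul_assoc]
    rw [hLleft, Matrix.one_mul, Matrix.mul_assoc, hUright, Matrix.mul_one]
  -- (1,1) block of conjugated S0
  have hY11 : ∀ X : Matrix (Fin n ⊕ Fin k) (Fin n ⊕ Fin k) ℝ, X.toBlocks₁₁ = Shat →
      (L⁻¹ * X * (Lᴴ)⁻¹).toBlocks₁₁ = Shat := by
    intro X hX
    conv_lhs => rw [← fromBlocks_toBlocks X]
    rw [hX, hLinv, hUinv, fromBlocks_multiply, fromBlocks_multiply, toBlocks_fromBlocks₁₁]
    simp
  -- trace identities
  have trace1 : (S⁻¹ * Sstar).trace = (S11⁻¹ * Shat).trace + (k : ℝ) := by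
    rw [hSinv, htr, hYstar, toBlocks_fromBlocks₁₁, toBlocks_fromBlocks₂₂,
      Matrix.nonsing_inv_mul _ hdSsc, Matrix.trace_one]
    simp
  -- determinants
  have hdetS : S.det = S11.det * Ssc.det := by
    rw [hfact, det_mul, det_mul, hdetL, hdetLH, det_fromBlocks_zero₂₁]
    ring
  have hdetSstar : Sstar.det = Shat.det * Ssc.det := by
    rw [hfactstar, det_mul, det_mul, hdetL, hdetLH, det_fromBlocks_zero₂₁]
    ring
  have hSstarpd : Sstar.PosDef := by
    rw [hfactstar]
    exact posDef_conj (posDef_fromBlocks_diag hShat hSscpd) hdL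
  have hcard : (Fintype.card (Fin n ⊕ Fin k) : ℝ) = (n : ℝ) + k := by
    simp [Fintype.card_sum]
  have part2 : Idiv Sstar S = Idiv Shat S11 := by
    rw [Idiv, Idiv, hdetS, hdetSstar, trace1, hcard,
      mul_div_mul_right _ _ hSscpd.det_pos.ne']
    simp only [Fintype.card_fin]
    ring
  refine ⟨hSstarpd, part2, ?_⟩
  intro S0 hS0 h011
  have trace0 : (S⁻¹ * S0).trace
      = (S11⁻¹ * Shat).trace + (Ssc⁻¹ * (L⁻¹ * S0 * (Lᴴ)⁻¹).toBlocks₂₂).trace := by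
    rw [hSinv, htr, hY11 S0 h011]
  have trace0' : (Sstar⁻¹ * S0).trace
      = (n : ℝ) + (Ssc⁻¹ * (L⁻¹ * S0 * (Lᴴ)⁻¹).toBlocks₂₂).trace := by
    rw [hSstarinv, htr, hY11 S0 h011, Matrix.nonsing_inv_mul _ hdShat, Matrix.trace_one]
    simp
  have hdS0 : S0.det ≠ 0 := hS0.det_pos.ne'
  have hdS : S.det ≠ 0 := hS.det_pos.ne'
  have hdSst : Sstar.det ≠ 0 := hSstarpd.det_pos.ne'
  have pyth : Idiv S0 S = Idiv S0 Sstar + Idiv Sstar S := by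
    rw [Idiv, Idiv, Idiv, trace0, trace0', trace1, hcard,
      Real.log_div hdS hdS0, Real.log_div hdSst hdS0, Real.log_div hdS hdSst]
    ring
  exact ⟨pyth, by have := Idiv_nonneg hS0 hSstarpd; linarith [pyth]⟩
end

section
/- Let Σ be an (n+k)×(n+k) symmetric positive definite matrix with blocks Σ₁₁, Σ₁₂, Σ₂₁, Σ₂₂, let Σ̂ be an n×n symmetric positive definite matrix, and let Σ* be the block matrix with (1,1)-block Σ̂, (1,2)-block Σ̂·Σ₁₁⁻¹·Σ₁₂, (2,1)-block Σ₂₁·Σ₁₁⁻¹·Σ̂, and (2,2)-block Σ₂₂ − Σ₂₁·Σ₁₁⁻¹·(Σ₁₁ − Σ̂)·Σ₁₁⁻¹·Σ₁₂. Then (Σ*)⁻¹ − Σ⁻¹ equals the block matrix whose (1,1)-block is Σ̂⁻¹ − Σ₁₁⁻¹ and whose other three blocks are zero; in particular (Σ*)⁻¹ differs from Σ⁻¹ only in the upper-left block and the Frobenius norm identity ‖Σ⁻¹ − (Σ*)⁻¹‖ = ‖Σ₁₁⁻¹ − Σ̂⁻¹‖ holds. -/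
open Matrix

/-- Frobenius norm of a matrix: `‖M‖ = (tr(MᵀM))^{1/2}`. -/
noncomputable def froNorm {ι κ : Type} [Fintype ι] [Fintype κ]
    (M : Matrix ι κ ℝ) : ℝ :=
  Real.sqrt ((Mᵀ * M).trace)

lemma fromBlocks_sub' {l m n o : Type} (A A' : Matrix n l ℝ) (B B' : Matrix n m ℝ)
    (C C' : Matrix o l ℝ) (D D' : Matrix o m ℝ) :
    fromBlocks A B C D - fromBlocks A' B' C' D' =
      fromBlocks (A - A') (B - B') (C - C') (D - D') := by
  rw [sub_eq_add_neg, Matrix.fromBlocks_neg, Matrix.fromBlocks_add]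
  simp [sub_eq_add_neg]

lemma froNorm_fromBlocks_zero {n k : ℕ} (M : Matrix (Fin n) (Fin n) ℝ) :
    froNorm (fromBlocks M 0 0 0 : Matrix (Fin n ⊕ Fin k) (Fin n ⊕ Fin k) ℝ) = froNorm M := by
  unfold froNorm
  congr 1
  rw [fromBlocks_transpose, fromBlocks_multiply]
  simp [Matrix.trace, Fintype.sum_sum_type, Matrix.diag]

theorem stmt_3 (n k : ℕ)
    (S : Matrix (Fin n ⊕ Fin k) (Fin n ⊕ Fin k) ℝ) (hS : S.PosDef)
    (Shat : Matrix (Fin n) (Fin n) ℝ) (hShat : Shat.PosDef)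
    (S11 : Matrix (Fin n) (Fin n) ℝ) (hS11 : S11 = S.toBlocks₁₁)
    (S12 : Matrix (Fin n) (Fin k) ℝ) (hS12 : S12 = S.toBlocks₁₂)
    (S21 : Matrix (Fin k) (Fin n) ℝ) (hS21 : S21 = S.toBlocks₂₁)
    (S22 : Matrix (Fin k) (Fin k) ℝ) (hS22 : S22 = S.toBlocks₂₂)
    (Sstar : Matrix (Fin n ⊕ Fin k) (Fin n ⊕ Fin k) ℝ)
    (hSstar : Sstar = fromBlocks Shat (Shat * S11⁻¹ * S12) (S21 * S11⁻¹ * Shat)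
      (S22 - S21 * S11⁻¹ * (S11 - Shat) * S11⁻¹ * S12)) :
    Sstar⁻¹ - S⁻¹ = fromBlocks (Shat⁻¹ - S11⁻¹) 0 0 0 ∧
    froNorm (S⁻¹ - Sstar⁻¹) = froNorm (S11⁻¹ - Shat⁻¹) := by
  -- S11 is positive definite
  have hS11pd : S11.PosDef := by
    rw [posDef_iff_dotProduct_mulVec]
    constructor
    · subst hS11
      ext i j
      have := congrFun (congrFun hS.1 (Sum.inl i)) (Sum.inl j)
      simpa [Matrix.toBlocks₁₁, Matrix.conjTranspose_apply] using this
    · intro x hx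
      have hy : (Sum.elim x (0 : Fin k → ℝ)) ≠ 0 := by
        intro h
        apply hx
        funext i
        simpa using congrFun h (Sum.inl i)
      have h2 := (posDef_iff_dotProduct_mulVec.mp hS).2 hy
      have key : dotProduct (star (Sum.elim x (0 : Fin k → ℝ))) (S *ᵥ Sum.elim x 0)
          = dotProduct (star x) (S11 *ᵥ x) := by
        subst hS11
        simp [dotProduct, mulVec, Fintype.sum_sum_type, Matrix.toBlocks₁₁]
      rwa [key] at h2
  letI iS11 : Invertible S11 := hS11pd.isUnit.invertible
  letI iShat : Invertible Shat := hShat.isUnit.invertible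
  letI iS : Invertible S := hS.isUnit.invertible
  have hSb : S = fromBlocks S11 S12 S21 S22 := by
    rw [hS11, hS12, hS21, hS22, fromBlocks_toBlocks]
  letI iSb : Invertible (fromBlocks S11 S12 S21 S22) := hSb ▸ iS
  letI iSc : Invertible (S22 - S21 * ⅟S11 * S12) :=
    invertibleOfFromBlocks₁₁Invertible S11 S12 S21 S22
  have hinv11 : (⅟S11 : Matrix (Fin n) (Fin n) ℝ) = S11⁻¹ := invOf_eq_nonsing_inv S11
  have hinvh : (⅟Shat : Matrix (Fin n) (Fin n) ℝ) = Shat⁻¹ := invOf_eq_nonsing_inv Shat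
  -- the Schur complement of Sstar equals the Schur complement of S
  have hscheq2 : (S22 - S21 * S11⁻¹ * (S11 - Shat) * S11⁻¹ * S12) -
      (S21 * S11⁻¹ * Shat) * Shat⁻¹ * (Shat * S11⁻¹ * S12) = S22 - S21 * ⅟S11 * S12 := by
    rw [hinv11]
    simp only [Matrix.mul_sub, Matrix.sub_mul, Matrix.mul_assoc,
      Matrix.mul_inv_cancel_left_of_invertible, Matrix.inv_mul_cancel_left_of_invertible]
    abel
  have hscheq : (S22 - S21 * S11⁻¹ * (S11 - Shat) * S11⁻¹ * S12) -
      (S21 * S11⁻¹ * Shat) * ⅟Shat * (Shat * S11⁻¹ * S12) = S22 - S21 * ⅟S11 * S12 := by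
    rw [hinvh]; exact hscheq2
  letI iSc' : Invertible ((S22 - S21 * S11⁻¹ * (S11 - Shat) * S11⁻¹ * S12) -
      (S21 * S11⁻¹ * Shat) * ⅟Shat * (Shat * S11⁻¹ * S12)) := hscheq ▸ iSc
  letI iSstarB : Invertible (fromBlocks Shat (Shat * S11⁻¹ * S12) (S21 * S11⁻¹ * Shat)
      (S22 - S21 * S11⁻¹ * (S11 - Shat) * S11⁻¹ * S12)) :=
    fromBlocks₁₁Invertible _ _ _ _
  -- inverse of S
  have hSinv : S⁻¹ = fromBlocks (⅟S11 + ⅟S11 * S12 * ⅟(S22 - S21 * ⅟S11 * S12) * S21 * ⅟S11)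
      (-(⅟S11 * S12 * ⅟(S22 - S21 * ⅟S11 * S12)))
      (-(⅟(S22 - S21 * ⅟S11 * S12) * S21 * ⅟S11)) (⅟(S22 - S21 * ⅟S11 * S12)) := by
    rw [hSb, ← invOf_eq_nonsing_inv, invOf_fromBlocks₁₁_eq]
  -- inverse of Sstar
  have hSstarinv : Sstar⁻¹ = fromBlocks
      (⅟Shat + ⅟Shat * (Shat * S11⁻¹ * S12) * ⅟((S22 - S21 * S11⁻¹ * (S11 - Shat) * S11⁻¹ * S12) -
        (S21 * S11⁻¹ * Shat) * ⅟Shat * (Shat * S11⁻¹ * S12)) * (S21 * S11⁻¹ * Shat) * ⅟Shat)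
      (-(⅟Shat * (Shat * S11⁻¹ * S12) * ⅟((S22 - S21 * S11⁻¹ * (S11 - Shat) * S11⁻¹ * S12) -
        (S21 * S11⁻¹ * Shat) * ⅟Shat * (Shat * S11⁻¹ * S12))))
      (-(⅟((S22 - S21 * S11⁻¹ * (S11 - Shat) * S11⁻¹ * S12) -
        (S21 * S11⁻¹ * Shat) * ⅟Shat * (Shat * S11⁻¹ * S12)) * (S21 * S11⁻¹ * Shat) * ⅟Shat))
      (⅟((S22 - S21 * S11⁻¹ * (S11 - Shat) * S11⁻¹ * S12) -
        (S21 * S11⁻¹ * Shat) * ⅟Shat * (Shat * S11⁻¹ * S12))) := by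
    rw [hSstar, ← invOf_eq_nonsing_inv, invOf_fromBlocks₁₁_eq]
  -- identify the two ⅟ of equal Schur complements
  have hScScinv : ⅟((S22 - S21 * S11⁻¹ * (S11 - Shat) * S11⁻¹ * S12) -
      (S21 * S11⁻¹ * Shat) * ⅟Shat * (Shat * S11⁻¹ * S12)) = ⅟(S22 - S21 * ⅟S11 * S12) := by
    rw [invOf_eq_nonsing_inv, invOf_eq_nonsing_inv (S22 - S21 * ⅟S11 * S12), hinvh, hscheq2]
  have hB : ⅟Shat * (Shat * S11⁻¹ * S12) = ⅟S11 * S12 := by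
    rw [hinvh, hinv11, ← Matrix.mul_assoc, Matrix.inv_mul_cancel_left_of_invertible]
  have hC : (S21 * S11⁻¹ * Shat) * ⅟Shat = S21 * ⅟S11 := by
    rw [hinvh, hinv11, Matrix.mul_assoc, Matrix.mul_assoc, Matrix.mul_inv_of_invertible,
      Matrix.mul_one]
  rw [hScScinv] at hSstarinv
  have h11eq : ⅟Shat * (Shat * S11⁻¹ * S12) * ⅟(S22 - S21 * ⅟S11 * S12) * (S21 * S11⁻¹ * Shat) *
      ⅟Shat = ⅟S11 * S12 * ⅟(S22 - S21 * ⅟S11 * S12) * S21 * ⅟S11 := by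
    rw [hB, Matrix.mul_assoc _ (S21 * S11⁻¹ * Shat) ⅟Shat, hC]
    simp only [Matrix.mul_assoc]
  have hC' : ⅟(S22 - S21 * ⅟S11 * S12) * (S21 * S11⁻¹ * Shat) * ⅟Shat =
      ⅟(S22 - S21 * ⅟S11 * S12) * S21 * ⅟S11 := by
    rw [Matrix.mul_assoc, hC]
    simp only [Matrix.mul_assoc]
  have hmain : Sstar⁻¹ - S⁻¹ = fromBlocks (Shat⁻¹ - S11⁻¹) 0 0 0 := by
    rw [hSstarinv, hSinv, fromBlocks_sub', h11eq, hB, hC']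
    simp only [sub_self, add_sub_add_right_eq_sub, hinvh, hinv11]
  refine ⟨hmain, ?_⟩
  have h2 : S⁻¹ - Sstar⁻¹ = fromBlocks (S11⁻¹ - Shat⁻¹) 0 0 0 := by
    rw [← neg_sub Sstar⁻¹ S⁻¹, hmain, Matrix.fromBlocks_neg, neg_sub, neg_zero, neg_zero, neg_zero]
  rw [h2, froNorm_fromBlocks_zero]
end

section
/- Let Σ be an (n+k)×(n+k) symmetric positive definite matrix with blocks Σ₁₁, Σ₁₂, Σ₂₁, Σ₂₂, and set Σ̃₁₁ = Σ₁₁ − Σ₁₂·Σ₂₂⁻¹·Σ₂₁. Define Σ* as the block matrix with (1,1)-block Σ₁₂·Σ₂₂⁻¹·Σ₂₁ + Δ(Σ̃₁₁), (1,2)-block Σ₁₂, (2,1)-block Σ₂₁, and (2,2)-block Σ₂₂. Then: (i) Σ* is symmetric positive definite and I(Σ ‖ Σ*) = I(Σ̃₁₁ ‖ Δ(Σ̃₁₁)); (ii) for every H ∈ ℝ^{n×k}, diagonal positive semidefinite D ∈ ℝ^{n×n}, and Q ∈ ℝ^{k×k} such that the block matrix Σ₁ with blocks (HHᵀ + D,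 HQ; QᵀHᵀ, QᵀQ) is positive definite, the Pythagorean rule I(Σ ‖ Σ₁) = I(Σ ‖ Σ*) + I(Σ* ‖ Σ₁) holds; consequently Σ* minimizes I(Σ ‖ Σ₁) over all such Σ₁. -/
open Matrix

/-- `Δ(M)`: the diagonal matrix with the same diagonal as `M`. -/
def deltaOp {ι : Type} [Fintype ι] [DecidableEq ι] (M : Matrix ι ι ℝ) :
    Matrix ι ι ℝ :=
  Matrix.diagonal (fun i => M i i)


variable {ι : Type} [Fintype ι] [DecidableEq ι]

lemma aux_trace_eq_sum_eigenvalues {A : Matrix ι ι ℝ} (hA : A.IsHermitian) :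
    A.trace = ∑ i, hA.eigenvalues i := by
  conv_lhs => rw [hA.spectral_theorem, Unitary.conjStarAlgAut_apply]
  rw [Matrix.trace_mul_cycle]
  rw [show (star (hA.eigenvectorUnitary : Matrix ι ι ℝ)) * (hA.eigenvectorUnitary : Matrix ι ι ℝ)
      = 1 from Unitary.coe_star_mul_self hA.eigenvectorUnitary]
  simp [Matrix.trace_diagonal]

lemma aux_posDef_of_det {A : Matrix ι ι ℝ} (h : A.PosSemidef) (hd : A.det ≠ 0) : A.PosDef := by
  refine posDef_iff_dotProduct_mulVec.mpr ⟨h.1, fun x hx => ?_⟩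
  rcases lt_or_eq_of_le (h.dotProduct_mulVec_nonneg x) with hlt | heq
  · exact hlt
  · exfalso
    have h0 : A *ᵥ x = 0 := (h.dotProduct_mulVec_zero_iff x).mp heq.symm
    apply hx
    have := congrArg (fun v => A⁻¹ *ᵥ v) h0
    simpa [Matrix.mulVec_mulVec, Matrix.nonsing_inv_mul _ (isUnit_iff_ne_zero.mpr hd)] using this

lemma aux_posDef_conj {A C : Matrix ι ι ℝ} (hA : A.PosDef) (hC : C.IsHermitian)
    (hd : C.det ≠ 0) : (C * A * C).PosDef := by
  have h1 : (C * A * Cᴴ).PosSemidef := hA.posSemidef.mul_mul_conjTranspose_same C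
  rw [hC.eq] at h1
  apply aux_posDef_of_det h1
  rw [det_mul, det_mul]
  exact mul_ne_zero (mul_ne_zero hd hA.det_pos.ne') hd

open scoped MatrixOrder in
lemma aux_Idiv_nonneg {A B : Matrix ι ι ℝ} (hA : A.PosDef) (hB : B.PosDef) :
    0 ≤ Idiv A B := by
  have hBi : (B⁻¹).PosDef := hB.inv
  set C := CFC.sqrt (B⁻¹) with hCdef
  have hCpsd : C.PosSemidef := Matrix.nonneg_iff_posSemidef.mp (CFC.sqrt_nonneg _)
  have hCC : C * C = B⁻¹ := CFC.sqrt_mul_sqrt_self _ hBi.posSemidef.nonneg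
  have hCC' : C.det * C.det = (B⁻¹).det := by rw [← det_mul, hCC]
  have hdetBi : (B⁻¹).det ≠ 0 := hBi.det_pos.ne'
  have hdetC : C.det ≠ 0 := by
    intro h; rw [h, mul_zero] at hCC'; exact hdetBi hCC'.symm
  have hM : (C * A * C).PosDef := aux_posDef_conj hA hCpsd.1 hdetC
  have hdetinv : (B⁻¹).det = (B.det)⁻¹ := by
    rw [Matrix.det_nonsing_inv, Ring.inverse_eq_inv]
  have hdet : (C * A * C).det = A.det / B.det := by
    rw [det_mul, det_mul]
    rw [show C.det * A.det * C.det = A.det * (C.det * C.det) by ring, hCC', hdetinv]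
    rw [div_eq_mul_inv]
  have htr : (B⁻¹ * A).trace = (C * A * C).trace := by
    rw [← hCC, Matrix.mul_assoc, Matrix.trace_mul_comm]
  set lam := hM.1.eigenvalues with hlam
  have hlampos : ∀ i, 0 < lam i := hM.eigenvalues_pos
  have hdet2 : (C * A * C).det = ∏ i, lam i := by
    simpa using hM.1.det_eq_prod_eigenvalues
  have htr2 : (C * A * C).trace = ∑ i, lam i := aux_trace_eq_sum_eigenvalues hM.1
  have hlog : Real.log (B.det / A.det) = - ∑ i, Real.log (lam i) := by
    rw [← Real.log_prod (fun i _ => (hlampos i).ne'), ← hdet2, hdet]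
    rw [Real.log_div hB.det_pos.ne' hA.det_pos.ne', Real.log_div hA.det_pos.ne' hB.det_pos.ne']
    ring
  have hcard : (Fintype.card ι : ℝ) = ∑ _i : ι, (1 : ℝ) := by simp
  have key : ∑ i, Real.log (lam i) ≤ ∑ i, lam i - ∑ _i : ι, (1 : ℝ) := by
    rw [← Finset.sum_sub_distrib]
    exact Finset.sum_le_sum fun i _ => (Real.log_le_sub_one_of_pos (hlampos i))
  rw [Idiv, hlog, hcard, htr, htr2]
  linarith

lemma aux_blocks22 {p q : Type} [Fintype p] [Fintype q] [DecidableEq p] [DecidableEq q]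
    {M : Matrix (p ⊕ q) (p ⊕ q) ℝ} (hM : M.PosDef) : M.toBlocks₂₂.PosDef := by
  refine posDef_iff_dotProduct_mulVec.mpr ⟨?_, ?_⟩
  · ext i j
    simpa [Matrix.conjTranspose_apply, Matrix.toBlocks₂₂] using
      congrFun (congrFun hM.1 (Sum.inr i)) (Sum.inr j)
  · intro x hx
    have hy : (Sum.elim (0 : p → ℝ) x) ≠ 0 := by
      intro h; apply hx; funext i; exact congrFun h (Sum.inr i)
    have h2 := hM.dotProduct_mulVec_pos hy
    rw [← Matrix.fromBlocks_toBlocks M, fromBlocks_mulVec] at h2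
    simpa [Function.star_sumElim, sumElim_dotProduct_sumElim] using h2

lemma aux_trace_special {p q : Type} [Fintype p] [Fintype q] [DecidableEq p] [DecidableEq q]
    (W : Matrix p p ℝ) (X : Matrix p q ℝ) (Y : Matrix q p ℝ) (Z : Matrix q q ℝ)
    (E : Matrix p p ℝ) (hW : W.IsDiag) (hE : ∀ i, E i i = 0) :
    (fromBlocks W X Y Z * fromBlocks E 0 0 0).trace = 0 := by
  rw [fromBlocks_multiply]
  have htb : ∀ (A : Matrix p p ℝ) (B : Matrix p q ℝ) (C : Matrix q p ℝ) (Dm : Matrix q q ℝ),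
      (fromBlocks A B C Dm).trace = A.trace + Dm.trace := by
    intro A B C Dm
    simp [Matrix.trace, Fintype.sum_sum_type, fromBlocks, Matrix.diag]
  rw [htb]
  have hWE : (W * E).trace = 0 := by
    rw [Matrix.trace]
    apply Finset.sum_eq_zero; intro i _
    rw [Matrix.diag, Matrix.mul_apply]
    apply Finset.sum_eq_zero; intro j _
    by_cases h : i = j
    · subst h; rw [hE, mul_zero]
    · rw [hW h, zero_mul]
  simp [hWE]

theorem stmt_4 (n k : ℕ)
    (S : Matrix (Fin n ⊕ Fin k) (Fin n ⊕ Fin k) ℝ) (hS : S.PosDef)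
    (S11 : Matrix (Fin n) (Fin n) ℝ) (hS11 : S11 = S.toBlocks₁₁)
    (S12 : Matrix (Fin n) (Fin k) ℝ) (hS12 : S12 = S.toBlocks₁₂)
    (S21 : Matrix (Fin k) (Fin n) ℝ) (hS21 : S21 = S.toBlocks₂₁)
    (S22 : Matrix (Fin k) (Fin k) ℝ) (hS22 : S22 = S.toBlocks₂₂)
    (St11 : Matrix (Fin n) (Fin n) ℝ) (hSt11 : St11 = S11 - S12 * S22⁻¹ * S21)
    (Sstar : Matrix (Fin n ⊕ Fin k) (Fin n ⊕ Fin k) ℝ)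
    (hSstar : Sstar =
      fromBlocks (S12 * S22⁻¹ * S21 + deltaOp St11) S12 S21 S22) :
    Sstar.PosDef ∧
    Idiv S Sstar = Idiv St11 (deltaOp St11) ∧
    ∀ (H : Matrix (Fin n) (Fin k) ℝ) (D : Matrix (Fin n) (Fin n) ℝ)
      (Q : Matrix (Fin k) (Fin k) ℝ),
      D.IsDiag → D.PosSemidef →
      (fromBlocks (H * Hᵀ + D) (H * Q) (Qᵀ * Hᵀ) (Qᵀ * Q)).PosDef →
      Idiv S (fromBlocks (H * Hᵀ + D) (H * Q) (Qᵀ * Hᵀ) (Qᵀ * Q)) =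
        Idiv S Sstar +
          Idiv Sstar (fromBlocks (H * Hᵀ + D) (H * Q) (Qᵀ * Hᵀ) (Qᵀ * Q)) ∧
      Idiv S Sstar ≤
        Idiv S (fromBlocks (H * Hᵀ + D) (H * Q) (Qᵀ * Hᵀ) (Qᵀ * Q)) := by
  -- basic setup
  have hS' : S = fromBlocks S11 S12 S21 S22 := by
    rw [hS11, hS12, hS21, hS22, fromBlocks_toBlocks]
  have h21 : S21 = S12ᴴ := by
    rw [hS21, hS12]
    ext i j
    simpa [Matrix.conjTranspose_apply, Matrix.toBlocks₂₁, Matrix.toBlocks₁₂] using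
      (congrFun (congrFun hS.1 (Sum.inr i)) (Sum.inl j)).symm
  have hS'' : S = fromBlocks S11 S12 S12ᴴ S22 := by rw [hS', h21]
  have hS22pd : S22.PosDef := by rw [hS22]; exact aux_blocks22 hS
  haveI iS22 : Invertible S22 := S22.invertibleOfIsUnitDet (isUnit_iff_ne_zero.mpr hS22pd.det_pos.ne')
  have hiS22 : (⅟S22 : Matrix (Fin k) (Fin k) ℝ) = S22⁻¹ := invOf_eq_nonsing_inv S22
  -- determinant of S
  have detS : S.det = S22.det * St11.det := by
    rw [hS', det_fromBlocks₂₂, hiS22, hSt11]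
  have hdetSpos := hS.det_pos
  have hdetSt11 : St11.det ≠ 0 := by
    intro h; rw [detS, h, mul_zero] at hdetSpos; exact lt_irrefl _ hdetSpos
  -- St11 pos def
  have hSt11psd : St11.PosSemidef := by
    have := (PosDef.fromBlocks₂₂ S11 S12 hS22pd).mp (hS'' ▸ hS.posSemidef)
    rw [← h21] at this
    rwa [hSt11]
  have hSt11pd : St11.PosDef := aux_posDef_of_det hSt11psd hdetSt11
  -- diagonal entries positive
  have hdiagpos : ∀ i, 0 < St11 i i := by
    intro i
    have h1 := hSt11pd.dotProduct_mulVec_pos (x := Pi.single i 1) (by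
      intro h; have := congrFun h i; simp at this)
    simpa [dotProduct, Matrix.mulVec, Pi.single_apply, Finset.sum_ite_eq] using h1
  have hDeltapd : (deltaOp St11).PosDef := Matrix.PosDef.diagonal hdiagpos
  haveI iDelta : Invertible (deltaOp St11) :=
    (deltaOp St11).invertibleOfIsUnitDet (isUnit_iff_ne_zero.mpr hDeltapd.det_pos.ne')
  -- Sstar posdef
  have e1 : S12 * S22⁻¹ * S21 + deltaOp St11 - S12 * S22⁻¹ * S12ᴴ = deltaOp St11 := by
    rw [← h21]; exact add_sub_cancel_left _ _
  have hSstarpsd : Sstar.PosSemidef := by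
    rw [hSstar, h21]
    refine (PosDef.fromBlocks₂₂ _ S12 hS22pd).mpr ?_
    rw [add_sub_cancel_left]
    exact hDeltapd.posSemidef
  have detSstar : Sstar.det = S22.det * (deltaOp St11).det := by
    rw [hSstar, det_fromBlocks₂₂, hiS22, add_sub_cancel_left]
  have hSstarpd : Sstar.PosDef := by
    apply aux_posDef_of_det hSstarpsd
    rw [detSstar]
    exact mul_ne_zero hS22pd.det_pos.ne' hDeltapd.det_pos.ne'
  -- difference matrix
  have hdiff : S - Sstar = fromBlocks (St11 - deltaOp St11) 0 0 0 := by
    rw [hS', hSstar]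
    have hx : fromBlocks S11 S12 S21 S22
        - fromBlocks (S12 * S22⁻¹ * S21 + deltaOp St11) S12 S21 S22
        = fromBlocks (S11 - (S12 * S22⁻¹ * S21 + deltaOp St11)) 0 0 0 := by
      ext i j; cases i <;> cases j <;> simp [fromBlocks]
    rw [hx, hSt11]
    abel
  have hE : ∀ i, (St11 - deltaOp St11) i i = 0 := by
    intro i; simp [deltaOp, Matrix.sub_apply]
  -- inverse of Sstar, block form
  haveI iSch : Invertible (S12 * S22⁻¹ * S21 + deltaOp St11 - S12 * ⅟S22 * S21) := by
    rw [show S12 * S22⁻¹ * S21 + deltaOp St11 - S12 * ⅟S22 * S21 = deltaOp St11 by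
      rw [hiS22, add_sub_cancel_left]]
    exact iDelta
  haveI iSstarF : Invertible (fromBlocks (S12 * S22⁻¹ * S21 + deltaOp St11) S12 S21 S22) :=
    Matrix.fromBlocks₂₂Invertible _ _ _ _
  have hinvF := Matrix.invOf_fromBlocks₂₂_eq (S12 * S22⁻¹ * S21 + deltaOp St11) S12 S21 S22
  have hblock : (Sstar⁻¹).toBlocks₁₁ = (deltaOp St11)⁻¹ := by
    rw [hSstar, ← invOf_eq_nonsing_inv, hinvF, toBlocks_fromBlocks₁₁,
      invOf_eq_nonsing_inv, hiS22, add_sub_cancel_left]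
  have hDeltaInv : (deltaOp St11)⁻¹ = diagonal (fun i => (St11 i i)⁻¹) := by
    apply Matrix.inv_eq_right_inv
    rw [deltaOp, diagonal_mul_diagonal]
    have : (fun i => St11 i i * (St11 i i)⁻¹) = fun _ => (1 : ℝ) := by
      funext i; exact mul_inv_cancel₀ (hdiagpos i).ne'
    rw [this, diagonal_one]
  have hblockdiag : ((Sstar⁻¹).toBlocks₁₁).IsDiag := by
    rw [hblock, hDeltaInv]
    exact Matrix.isDiag_diagonal _
  have htr0 : (Sstar⁻¹ * (S - Sstar)).trace = 0 := by
    rw [hdiff]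
    conv_lhs => rw [← fromBlocks_toBlocks (Sstar⁻¹)]
    exact aux_trace_special _ _ _ _ _ hblockdiag hE
  have hSstarinv : Sstar⁻¹ * Sstar = 1 :=
    Matrix.nonsing_inv_mul _ (isUnit_iff_ne_zero.mpr hSstarpd.det_pos.ne')
  have hsplit : Sstar⁻¹ * S = 1 + Sstar⁻¹ * (S - Sstar) := by
    rw [Matrix.mul_sub, hSstarinv]; abel
  have htrS : (Sstar⁻¹ * S).trace = (n : ℝ) + k := by
    rw [hsplit, Matrix.trace_add, htr0, add_zero, Matrix.trace_one]
    simp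
  have htrD : ((deltaOp St11)⁻¹ * St11).trace = (n : ℝ) := by
    have hv : ∀ i, ((deltaOp St11)⁻¹ * St11) i i = 1 := by
      intro i
      rw [hDeltaInv, Matrix.mul_apply]
      rw [Finset.sum_eq_single i]
      · simp only [Matrix.diagonal_apply_eq]
        exact inv_mul_cancel₀ (hdiagpos i).ne'
      · intro j _ hj
        simp [Matrix.diagonal_apply_ne _ (Ne.symm hj)]
      · intro h; simp at h
    rw [Matrix.trace]
    simp [Matrix.diag, hv]
  have hratio : Sstar.det / S.det = (deltaOp St11).det / St11.det := by
    rw [detS, detSstar, mul_div_mul_left _ _ hS22pd.det_pos.ne']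
  have heq1 : Idiv S Sstar = Idiv St11 (deltaOp St11) := by
    rw [Idiv, Idiv, hratio, htrS, htrD]
    simp only [Fintype.card_sum, Fintype.card_fin, Nat.cast_add]
    ring
  refine ⟨hSstarpd, heq1, ?_⟩
  intro H D Q hDdiag hDpsd hTpd
  set T := fromBlocks (H * Hᵀ + D) (H * Q) (Qᵀ * Hᵀ) (Qᵀ * Q) with hT
  have hQQpd : (Qᵀ * Q).PosDef := by
    have := aux_blocks22 hTpd
    simpa [hT, toBlocks_fromBlocks₂₂] using this
  have hdetQ : Q.det ≠ 0 := by
    have h1 := hQQpd.det_pos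
    rw [det_mul, det_transpose] at h1
    intro h; rw [h, mul_zero] at h1; exact lt_irrefl _ h1
  have hdetQt : Qᵀ.det ≠ 0 := by rwa [det_transpose]
  haveI iQQ : Invertible (Qᵀ * Q) :=
    (Qᵀ * Q).invertibleOfIsUnitDet (isUnit_iff_ne_zero.mpr hQQpd.det_pos.ne')
  have hiQQ : (⅟(Qᵀ * Q) : Matrix (Fin k) (Fin k) ℝ) = (Qᵀ * Q)⁻¹ := invOf_eq_nonsing_inv _
  have e3 : H * Q * ((Qᵀ * Q)⁻¹ * (Qᵀ * Hᵀ)) = H * Hᵀ := by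
    rw [Matrix.mul_inv_rev, Matrix.mul_assoc Q⁻¹,
      Matrix.nonsing_inv_mul_cancel_left _ _ (isUnit_iff_ne_zero.mpr hdetQt),
      Matrix.mul_assoc, Matrix.mul_nonsing_inv_cancel_left _ _ (isUnit_iff_ne_zero.mpr hdetQ)]
  have e4 : H * Hᵀ + D - H * Q * (Qᵀ * Q)⁻¹ * (Qᵀ * Hᵀ) = D := by
    rw [Matrix.mul_assoc (H * Q), e3, add_sub_cancel_left]
  have detT : T.det = (Qᵀ * Q).det * D.det := by
    rw [hT, det_fromBlocks₂₂, hiQQ, e4]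
  have hdetD : D.det ≠ 0 := by
    have h1 := hTpd.det_pos
    rw [detT] at h1
    intro h; rw [h, mul_zero] at h1; exact lt_irrefl _ h1
  have hDpd : D.PosDef := aux_posDef_of_det hDpsd hdetD
  haveI iD : Invertible D := D.invertibleOfIsUnitDet (isUnit_iff_ne_zero.mpr hdetD)
  haveI iSchT : Invertible (H * Hᵀ + D - H * Q * ⅟(Qᵀ * Q) * (Qᵀ * Hᵀ)) := by
    rw [show H * Hᵀ + D - H * Q * ⅟(Qᵀ * Q) * (Qᵀ * Hᵀ) = D by rw [hiQQ, e4]]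
    exact iD
  haveI iTF : Invertible (fromBlocks (H * Hᵀ + D) (H * Q) (Qᵀ * Hᵀ) (Qᵀ * Q)) :=
    Matrix.fromBlocks₂₂Invertible _ _ _ _
  have hinvTF := Matrix.invOf_fromBlocks₂₂_eq (H * Hᵀ + D) (H * Q) (Qᵀ * Hᵀ) (Qᵀ * Q)
  have hblockT : (T⁻¹).toBlocks₁₁ = D⁻¹ := by
    rw [hT, ← invOf_eq_nonsing_inv, hinvTF, toBlocks_fromBlocks₁₁,
      invOf_eq_nonsing_inv, hiQQ, e4]
  have hblockTdiag : ((T⁻¹).toBlocks₁₁).IsDiag := by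
    rw [hblockT, ← hDdiag.diagonal_diag, Matrix.inv_diagonal]
    exact Matrix.isDiag_diagonal _
  have htr0T : (T⁻¹ * (S - Sstar)).trace = 0 := by
    rw [hdiff]
    conv_lhs => rw [← fromBlocks_toBlocks (T⁻¹)]
    exact aux_trace_special _ _ _ _ _ hblockTdiag hE
  have htrTS : (T⁻¹ * S).trace = (T⁻¹ * Sstar).trace := by
    have hx : T⁻¹ * S = T⁻¹ * Sstar + T⁻¹ * (S - Sstar) := by
      rw [← Matrix.mul_add]; congr 1; abel
    rw [hx, Matrix.trace_add, htr0T, add_zero]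
  have hdetT : (0 : ℝ) < T.det := hTpd.det_pos
  have hdetSstarpos : (0 : ℝ) < Sstar.det := hSstarpd.det_pos
  have hlogsplit : Real.log (T.det / S.det)
      = Real.log (Sstar.det / S.det) + Real.log (T.det / Sstar.det) := by
    rw [Real.log_div hdetT.ne' hdetSpos.ne', Real.log_div hdetSstarpos.ne' hdetSpos.ne',
      Real.log_div hdetT.ne' hdetSstarpos.ne']
    ring
  have hpyth : Idiv S T = Idiv S Sstar + Idiv Sstar T := by
    rw [Idiv, Idiv, Idiv, hlogsplit, htrS, htrTS]
    simp [Fintype.card_sum]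
    ring
  refine ⟨hpyth, ?_⟩
  have hge : 0 ≤ Idiv Sstar T := aux_Idiv_nonneg hSstarpd hTpd
  rw [hpyth]
  linarith
end

section
/- Let Σ be an (n+k)×(n+k) symmetric positive definite matrix with blocks Σ₁₁, Σ₁₂, Σ₂₁, Σ₂₂, let P₀ be a k×k symmetric positive definite matrix, and let Q₀ ∈ ℝ^{k×k} satisfy Q₀ᵀQ₀ = P₀. Set Σ̃₁₁ = Σ₁₁ − Σ₁₂·Σ₂₂⁻¹·Σ₂₁ and define Σ₀* as the block matrix with (1,1)-block Σ₁₂·Σ₂₂⁻¹·P₀·Σ₂₂⁻¹·Σ₂₁ + Δ(Σ̃₁₁), (1,2)-block Σ₁₂·Σ₂₂⁻¹·P₀, (2,1)-block P₀·Σ₂₂⁻¹·Σ₂₁, and (2,2)-block P₀. Then Σ₀* equals the block matrix with blocks (H*H*ᵀ + D*, H*Q₀; Q₀ᵀH*ᵀ, Q₀ᵀQ₀) for H* = Σ₁₂·Σ₂₂⁻¹·Q₀ᵀ and D* = Δ(Σ̃₁₁), and for every H ∈ ℝ^{n×k} and diagonal positive semidefinite D ∈ ℝ^{n×n} such that the block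 matrix Σ₁ with blocks (HHᵀ + D, HQ₀; Q₀ᵀHᵀ, Q₀ᵀQ₀) is positive definite, one has I(Σ ‖ Σ₀*) ≤ I(Σ ‖ Σ₁). -/
open Matrix

section Helpers
variable {m' n' : Type} [Fintype m'] [Fintype n'] [DecidableEq m'] [DecidableEq n']

lemma posDef_diag_pos' {M : Matrix n' n' ℝ} (h : M.PosDef) (i : n') : 0 < M i i := by
  exact h.diag_pos

lemma posSemidef_diag_nonneg' {M : Matrix n' n' ℝ} (h : M.PosSemidef) (i : n') : 0 ≤ M i i := by
  exact h.diag_nonneg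

lemma posDef_toBlocks₂₂' {M : Matrix (m' ⊕ n') (m' ⊕ n') ℝ} (hM : M.PosDef) :
    M.toBlocks₂₂.PosDef := by
  refine posDef_iff_dotProduct_mulVec.mpr ⟨?_, ?_⟩
  · ext i j
    simpa [toBlocks₂₂, conjTranspose_apply] using hM.1.apply (Sum.inr i) (Sum.inr j)
  · intro x hx
    have hv : (Sum.elim (0 : m' → ℝ) x) ≠ 0 := by
      intro hc
      apply hx
      funext i
      exact congrFun hc (Sum.inr i)
    have h2 := hM.dotProduct_mulVec_pos hv
    have hrw : star (Sum.elim (0 : m' → ℝ) x) ⬝ᵥ M *ᵥ Sum.elim (0 : m' → ℝ) x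
        = star x ⬝ᵥ M.toBlocks₂₂ *ᵥ x := by
      rw [← fromBlocks_toBlocks M]
      simp [fromBlocks_mulVec, dotProduct, Fintype.sum_sum_type, mulVec]
    rwa [hrw] at h2

lemma schur22_posDef' {A : Matrix m' m' ℝ} {B : Matrix m' n' ℝ} {Dm : Matrix n' n' ℝ}
    (hD : Dm.PosDef) (h : (fromBlocks A B Bᴴ Dm).PosDef) :
    (A - B * Dm⁻¹ * Bᴴ).PosDef := by
  haveI := hD.isUnit.invertible
  have hA : Aᴴ = A := (fromBlocks_inj.mp (by rw [← fromBlocks_conjTranspose, h.1.eq])).1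
  refine posDef_iff_dotProduct_mulVec.mpr ⟨?_, ?_⟩
  · show _ = _
    rw [conjTranspose_sub, hA, conjTranspose_mul, conjTranspose_mul,
      conjTranspose_conjTranspose, conjTranspose_nonsing_inv, hD.1.eq, Matrix.mul_assoc]
  · intro x hx
    set y : n' → ℝ := -((Dm⁻¹ * Bᴴ) *ᵥ x) with hy
    have hv : (x ⊕ᵥ y) ≠ 0 := by
      intro hc
      apply hx
      funext i
      exact congrFun hc (Sum.inl i)
    have hkey := schur_complement_eq₂₂ A B x y hD.1
    have hpos := h.dotProduct_mulVec_pos hv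
    have hz : (Dm⁻¹ * Bᴴ) *ᵥ x + y = 0 := by simp [hy]
    rw [dotProduct_mulVec, hkey, hz] at hpos
    rw [dotProduct_mulVec]
    simpa using hpos

lemma trace_fromBlocks'' (A : Matrix m' m' ℝ) (B : Matrix m' n' ℝ) (C : Matrix n' m' ℝ)
    (D : Matrix n' n' ℝ) : (fromBlocks A B C D).trace = A.trace + D.trace := by
  simp [Matrix.trace, Fintype.sum_sum_type, fromBlocks, Matrix.diag]

end Helpers

lemma keyval {n k : ℕ} (S : Matrix (Fin n ⊕ Fin k) (Fin n ⊕ Fin k) ℝ)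
    (Q0 : Matrix (Fin k) (Fin k) ℝ) (hQ0 : IsUnit Q0.det)
    (H : Matrix (Fin n) (Fin k) ℝ) (d : Fin n → ℝ) (hd : ∀ i, 0 < d i) :
    (fromBlocks (H * Hᵀ + diagonal d) (H * Q0) (Q0ᵀ * Hᵀ) (Q0ᵀ * Q0)).det
      = (∏ i, d i) * (Q0ᵀ * Q0).det ∧
    Real.log ((fromBlocks (H * Hᵀ + diagonal d) (H * Q0) (Q0ᵀ * Hᵀ) (Q0ᵀ * Q0)).det)
      + ((fromBlocks (H * Hᵀ + diagonal d) (H * Q0) (Q0ᵀ * Hᵀ) (Q0ᵀ * Q0))⁻¹ * S).trace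
    = (∑ i, (Real.log (d i)
        + (S.toBlocks₁₁ - (H * Q0ᵀ⁻¹) * S.toBlocks₂₁ - S.toBlocks₁₂ * (H * Q0ᵀ⁻¹)ᵀ
            + (H * Q0ᵀ⁻¹) * S.toBlocks₂₂ * (H * Q0ᵀ⁻¹)ᵀ) i i / d i))
      + Real.log ((Q0ᵀ * Q0).det) + ((Q0ᵀ * Q0)⁻¹ * S.toBlocks₂₂).trace := by
  set L : Matrix (Fin n) (Fin k) ℝ := H * Q0ᵀ⁻¹ with hL
  set P0 : Matrix (Fin k) (Fin k) ℝ := Q0ᵀ * Q0 with hP0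
  set Dd : Matrix (Fin n) (Fin n) ℝ := diagonal d with hDd
  have hQT : IsUnit Q0ᵀ.det := by rwa [det_transpose]
  have hL1 : L * P0 = H * Q0 := by
    rw [hL, hP0, Matrix.mul_assoc, ← Matrix.mul_assoc Q0ᵀ⁻¹, nonsing_inv_mul _ hQT,
      Matrix.one_mul]
  have hLt : Lᵀ = Q0⁻¹ * Hᵀ := by
    rw [hL, transpose_mul, transpose_nonsing_inv, transpose_transpose]
  have hL2 : L * P0 * Lᵀ = H * Hᵀ := by
    rw [hL1, hLt, Matrix.mul_assoc, ← Matrix.mul_assoc Q0, mul_nonsing_inv _ hQ0,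
      Matrix.one_mul]
  have hL3 : P0 * Lᵀ = Q0ᵀ * Hᵀ := by
    rw [hP0, hLt, Matrix.mul_assoc, ← Matrix.mul_assoc Q0, mul_nonsing_inv _ hQ0,
      Matrix.one_mul]
  have hfact : fromBlocks (H * Hᵀ + Dd) (H * Q0) (Q0ᵀ * Hᵀ) P0
      = fromBlocks 1 L 0 1 * fromBlocks Dd 0 0 P0 * (fromBlocks 1 L 0 1)ᵀ := by
    rw [fromBlocks_transpose, transpose_one, transpose_zero, fromBlocks_multiply,
      fromBlocks_multiply]
    simp only [Matrix.one_mul, Matrix.mul_one, Matrix.zero_mul, Matrix.mul_zero,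
      add_zero, zero_add, Matrix.transpose_one]
    rw [hL1, hL3, ← hL1, hL2, add_comm Dd]
  have hEinv : (fromBlocks 1 L 0 1 : Matrix (Fin n ⊕ Fin k) (Fin n ⊕ Fin k) ℝ)⁻¹
      = fromBlocks 1 (-L) 0 1 := by
    apply inv_eq_right_inv
    rw [fromBlocks_multiply]
    simp [← fromBlocks_one]
  have hETinv : ((fromBlocks 1 L 0 1 : Matrix (Fin n ⊕ Fin k) (Fin n ⊕ Fin k) ℝ)ᵀ)⁻¹
      = (fromBlocks 1 (-L) 0 1)ᵀ := by
    rw [← transpose_nonsing_inv, hEinv]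
  have hdne : ∀ i ∈ Finset.univ, d i ≠ 0 := fun i _ => (hd i).ne'
  have hprodpos : 0 < ∏ i, d i := Finset.prod_pos (fun i _ => hd i)
  have hP0det : IsUnit P0.det := by
    rw [hP0, det_mul, det_transpose]; exact hQ0.mul hQ0
  have hDdet : IsUnit Dd.det := by
    rw [hDd, det_diagonal]; exact hprodpos.ne'.isUnit
  have hΛinv : (fromBlocks Dd 0 0 P0)⁻¹
      = fromBlocks (diagonal fun i => (d i)⁻¹) 0 0 P0⁻¹ := by
    apply inv_eq_right_inv
    rw [fromBlocks_multiply]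
    simp [hDd, diagonal_mul_diagonal, mul_nonsing_inv _ hP0det,
      fun i => mul_inv_cancel₀ (hd i).ne', ← fromBlocks_one, ← diagonal_one]
  have hdetE : (fromBlocks 1 L 0 1 : Matrix (Fin n ⊕ Fin k) (Fin n ⊕ Fin k) ℝ).det = 1 := by
    rw [det_fromBlocks_zero₂₁]; simp
  have hdet : (fromBlocks (H * Hᵀ + Dd) (H * Q0) (Q0ᵀ * Hᵀ) P0).det
      = (∏ i, d i) * P0.det := by
    rw [hfact, det_mul, det_mul, det_transpose, hdetE, det_fromBlocks_zero₂₁, hDd,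
      det_diagonal]
    ring
  refine ⟨hdet, ?_⟩
  have hinv : (fromBlocks (H * Hᵀ + Dd) (H * Q0) (Q0ᵀ * Hᵀ) P0)⁻¹
      = (fromBlocks 1 (-L) 0 1)ᵀ * (fromBlocks (diagonal fun i => (d i)⁻¹) 0 0 P0⁻¹
          * fromBlocks 1 (-L) 0 1) := by
    rw [hfact, Matrix.mul_inv_rev, Matrix.mul_inv_rev, hEinv, hETinv, hΛinv]
  have htr : ((fromBlocks (H * Hᵀ + Dd) (H * Q0) (Q0ᵀ * Hᵀ) P0)⁻¹ * S).trace
      = ((fromBlocks (diagonal fun i => (d i)⁻¹) 0 0 P0⁻¹)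
          * (fromBlocks 1 (-L) 0 1 * (S * (fromBlocks 1 (-L) 0 1)ᵀ))).trace := by
    rw [hinv, Matrix.mul_assoc, trace_mul_comm, Matrix.mul_assoc, Matrix.mul_assoc]
  have hK : S.toBlocks₁₁ - S.toBlocks₁₂ * Lᵀ - L * S.toBlocks₂₁ + L * (S.toBlocks₂₂ * Lᵀ)
      = S.toBlocks₁₁ - L * S.toBlocks₂₁ - S.toBlocks₁₂ * Lᵀ + L * S.toBlocks₂₂ * Lᵀ := by
    rw [← Matrix.mul_assoc]
    abel
  have hW : fromBlocks 1 (-L) 0 1 * (S * (fromBlocks 1 (-L) 0 1)ᵀ)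
      = fromBlocks
          (S.toBlocks₁₁ - L * S.toBlocks₂₁ - S.toBlocks₁₂ * Lᵀ + L * S.toBlocks₂₂ * Lᵀ)
          (S.toBlocks₁₂ - L * S.toBlocks₂₂)
          (S.toBlocks₂₁ - S.toBlocks₂₂ * Lᵀ)
          S.toBlocks₂₂ := by
    rw [← fromBlocks_toBlocks S, fromBlocks_transpose, transpose_one, transpose_zero,
      fromBlocks_multiply, fromBlocks_multiply]
    simp only [Matrix.one_mul, Matrix.mul_one, Matrix.zero_mul, Matrix.mul_zero,
      add_zero, zero_add, transpose_neg, Matrix.neg_mul, Matrix.mul_neg,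
      ← sub_eq_add_neg, Matrix.mul_sub, Matrix.transpose_one, toBlocks_fromBlocks₁₁,
      toBlocks_fromBlocks₁₂, toBlocks_fromBlocks₂₁, toBlocks_fromBlocks₂₂]
    rw [fromBlocks_inj]
    refine ⟨?_, ?_, ?_, ?_⟩ <;> (try rw [← Matrix.mul_assoc]) <;> abel
  have htrdiag : ∀ (M : Matrix (Fin n) (Fin n) ℝ),
      ((diagonal fun i => (d i)⁻¹) * M).trace = ∑ i, M i i / d i := by
    intro M
    simp [Matrix.trace, Matrix.diag, diagonal_mul, div_eq_inv_mul]
  have htrΛ : ((fromBlocks (diagonal fun i => (d i)⁻¹) 0 0 P0⁻¹)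
      * (fromBlocks 1 (-L) 0 1 * (S * (fromBlocks 1 (-L) 0 1)ᵀ))).trace
      = (∑ i, (S.toBlocks₁₁ - L * S.toBlocks₂₁ - S.toBlocks₁₂ * Lᵀ
          + L * S.toBlocks₂₂ * Lᵀ) i i / d i) + (P0⁻¹ * S.toBlocks₂₂).trace := by
    rw [hW, fromBlocks_multiply]
    simp only [Matrix.zero_mul, Matrix.mul_zero, add_zero, zero_add]
    rw [trace_fromBlocks'', htrdiag]
  have hP0ne : P0.det ≠ 0 := hP0det.ne_zero
  have hlog : Real.log ((∏ i, d i) * P0.det)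
      = (∑ i, Real.log (d i)) + Real.log P0.det := by
    rw [Real.log_mul hprodpos.ne' hP0ne, Real.log_prod hdne]
  rw [hdet, htr, htrΛ, hlog, Finset.sum_add_distrib]
  ring

theorem stmt_5 (n k : ℕ)
    (S : Matrix (Fin n ⊕ Fin k) (Fin n ⊕ Fin k) ℝ) (hS : S.PosDef)
    (S11 : Matrix (Fin n) (Fin n) ℝ) (hS11 : S11 = S.toBlocks₁₁)
    (S12 : Matrix (Fin n) (Fin k) ℝ) (hS12 : S12 = S.toBlocks₁₂)
    (S21 : Matrix (Fin k) (Fin n) ℝ) (hS21 : S21 = S.toBlocks₂₁)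
    (S22 : Matrix (Fin k) (Fin k) ℝ) (hS22 : S22 = S.toBlocks₂₂)
    (P0 : Matrix (Fin k) (Fin k) ℝ) (hP0 : P0.PosDef)
    (Q0 : Matrix (Fin k) (Fin k) ℝ) (hQ0 : Q0ᵀ * Q0 = P0)
    (St11 : Matrix (Fin n) (Fin n) ℝ) (hSt11 : St11 = S11 - S12 * S22⁻¹ * S21)
    (S0star : Matrix (Fin n ⊕ Fin k) (Fin n ⊕ Fin k) ℝ)
    (hS0star : S0star =
      fromBlocks (S12 * S22⁻¹ * P0 * S22⁻¹ * S21 + deltaOp St11)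
        (S12 * S22⁻¹ * P0) (P0 * S22⁻¹ * S21) P0)
    (Hstar : Matrix (Fin n) (Fin k) ℝ) (hHstar : Hstar = S12 * S22⁻¹ * Q0ᵀ)
    (Dstar : Matrix (Fin n) (Fin n) ℝ) (hDstar : Dstar = deltaOp St11) :
    S0star = fromBlocks (Hstar * Hstarᵀ + Dstar) (Hstar * Q0)
      (Q0ᵀ * Hstarᵀ) (Q0ᵀ * Q0) ∧
    ∀ (H : Matrix (Fin n) (Fin k) ℝ) (D : Matrix (Fin n) (Fin n) ℝ),
      D.IsDiag → D.PosSemidef →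
      (fromBlocks (H * Hᵀ + D) (H * Q0) (Q0ᵀ * Hᵀ) (Q0ᵀ * Q0)).PosDef →
      Idiv S S0star ≤
        Idiv S (fromBlocks (H * Hᵀ + D) (H * Q0) (Q0ᵀ * Hᵀ) (Q0ᵀ * Q0)) := by
  subst hS0star hHstar hDstar hSt11 hS11 hS12 hS21 hS22 hQ0
  -- basic facts
  have hQdet : IsUnit Q0.det := by
    have h1 := hP0.det_pos
    rw [det_mul, det_transpose] at h1
    exact (mul_self_pos.mp h1).isUnit
  have hQTdet : IsUnit Q0ᵀ.det := by rwa [det_transpose]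
  have hS21T : S.toBlocks₂₁ = S.toBlocks₁₂ᵀ := by
    ext i j
    simpa [toBlocks₂₁, toBlocks₁₂, conjTranspose_apply] using
      (hS.1.apply (Sum.inr i) (Sum.inl j)).symm
  have hS.toBlocks₂₂pd : S.toBlocks₂₂.PosDef := posDef_toBlocks₂₂' hS
  have hS.toBlocks₂₂u : IsUnit S.toBlocks₂₂.det := hS.toBlocks₂₂pd.det_pos.ne'.isUnit
  have hS.toBlocks₂₂t : S.toBlocks₂₂ᵀ = S.toBlocks₂₂ := by
    ext i j
    simpa [conjTranspose_apply] using (hS.toBlocks₂₂pd.1.apply j i).symm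
  have hS.toBlocks₂₂it : S.toBlocks₂₂⁻¹ᵀ = S.toBlocks₂₂⁻¹ := by rw [transpose_nonsing_inv, hS.toBlocks₂₂t]
  -- part 1
  have hHstarT : (S.toBlocks₁₂ * S.toBlocks₂₂⁻¹ * Q0ᵀ)ᵀ = Q0 * (S.toBlocks₂₂⁻¹ * S.toBlocks₂₁) := by
    rw [transpose_mul, transpose_mul, transpose_transpose, hS.toBlocks₂₂it, ← hS21T]
  have hpart1 : fromBlocks (S.toBlocks₁₂ * S.toBlocks₂₂⁻¹ * (Q0ᵀ * Q0) * S.toBlocks₂₂⁻¹ * S.toBlocks₂₁ + deltaOp (S.toBlocks₁₁ - S.toBlocks₁₂ * S.toBlocks₂₂⁻¹ * S.toBlocks₂₁))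
        (S.toBlocks₁₂ * S.toBlocks₂₂⁻¹ * (Q0ᵀ * Q0)) ((Q0ᵀ * Q0) * S.toBlocks₂₂⁻¹ * S.toBlocks₂₁) (Q0ᵀ * Q0)
      = fromBlocks ((S.toBlocks₁₂ * S.toBlocks₂₂⁻¹ * Q0ᵀ) * (S.toBlocks₁₂ * S.toBlocks₂₂⁻¹ * Q0ᵀ)ᵀ + deltaOp (S.toBlocks₁₁ - S.toBlocks₁₂ * S.toBlocks₂₂⁻¹ * S.toBlocks₂₁))
        ((S.toBlocks₁₂ * S.toBlocks₂₂⁻¹ * Q0ᵀ) * Q0) (Q0ᵀ * (S.toBlocks₁₂ * S.toBlocks₂₂⁻¹ * Q0ᵀ)ᵀ) (Q0ᵀ * Q0) := by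
    rw [fromBlocks_inj]
    refine ⟨?_, ?_, ?_, rfl⟩
    · rw [hHstarT]
      simp only [Matrix.mul_assoc]
    · simp only [Matrix.mul_assoc]
    · rw [hHstarT]
      simp only [Matrix.mul_assoc]
  refine ⟨hpart1, ?_⟩
  intro H D hDdiag hDpsd hpos
  -- D is positive definite
  have hCT : (H * Q0)ᴴ = Q0ᵀ * Hᵀ := by
    rw [conjTranspose_mul, conjTranspose_eq_transpose_of_trivial,
      conjTranspose_eq_transpose_of_trivial]
  have hpos' : (fromBlocks (H * Hᵀ + D) (H * Q0) ((H * Q0)ᴴ) (Q0ᵀ * Q0)).PosDef := by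
    rw [hCT]; exact hpos
  have hschurD := schur22_posDef' hP0 hpos'
  have hDpd : D.PosDef := by
    have hcan : H * Q0 * (Q0ᵀ * Q0)⁻¹ * (H * Q0)ᴴ = H * Hᵀ := by
      rw [hCT, Matrix.mul_inv_rev]
      simp only [Matrix.mul_assoc]
      rw [← Matrix.mul_assoc Q0ᵀ⁻¹, nonsing_inv_mul _ hQTdet, Matrix.one_mul,
        ← Matrix.mul_assoc Q0, mul_nonsing_inv _ hQdet, Matrix.one_mul]
    rwa [hcan, add_sub_cancel_left] at hschurD
  -- the Schur complement of S is positive definite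
  have hSfb : fromBlocks S.toBlocks₁₁ S.toBlocks₁₂ (S.toBlocks₁₂ᴴ) S.toBlocks₂₂ = S := by
    rw [conjTranspose_eq_transpose_of_trivial, ← hS21T, fromBlocks_toBlocks]
  have hStpd : (S.toBlocks₁₁ - S.toBlocks₁₂ * S.toBlocks₂₂⁻¹ * S.toBlocks₂₁).PosDef := by
    have := schur22_posDef' hS.toBlocks₂₂pd (by rwa [hSfb])
    rwa [conjTranspose_eq_transpose_of_trivial, ← hS21T] at this
  have stpos : ∀ i, 0 < (S.toBlocks₁₁ - S.toBlocks₁₂ * S.toBlocks₂₂⁻¹ * S.toBlocks₂₁) i i := fun i => posDef_diag_pos' hStpd i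
  have dpos : ∀ i, 0 < D i i := fun i => posDef_diag_pos' hDpd i
  have ddiag : D = diagonal (fun i => D i i) := hDdiag.diagonal_diag.symm
  -- keyval applications
  obtain ⟨hdet1, hval1⟩ := keyval S Q0 hQdet H (fun i => D i i) dpos
  rw [← ddiag] at hdet1 hval1
  obtain ⟨hdet0, hval0⟩ := keyval S Q0 hQdet (S.toBlocks₁₂ * S.toBlocks₂₂⁻¹ * Q0ᵀ)
    (fun i => (S.toBlocks₁₁ - S.toBlocks₁₂ * S.toBlocks₂₂⁻¹ * S.toBlocks₂₁) i i) stpos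
  -- the K identity
  have hKgen : ∀ L : Matrix (Fin n) (Fin k) ℝ,
      S.toBlocks₁₁ - L * S.toBlocks₂₁ - S.toBlocks₁₂ * Lᵀ + L * S.toBlocks₂₂ * Lᵀ
      = (S.toBlocks₁₁ - S.toBlocks₁₂ * S.toBlocks₂₂⁻¹ * S.toBlocks₂₁) + (L - S.toBlocks₁₂ * S.toBlocks₂₂⁻¹) * S.toBlocks₂₂ * (L - S.toBlocks₁₂ * S.toBlocks₂₂⁻¹)ᵀ := by
    intro L
    have h1 : (L - S.toBlocks₁₂ * S.toBlocks₂₂⁻¹)ᵀ = Lᵀ - S.toBlocks₂₂⁻¹ * S.toBlocks₂₁ := by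
      rw [transpose_sub, transpose_mul, hS.toBlocks₂₂it, ← hS21T]
    have e1 : L * S.toBlocks₂₂ * (S.toBlocks₂₂⁻¹ * S.toBlocks₂₁) = L * S.toBlocks₂₁ := by
      rw [Matrix.mul_assoc, ← Matrix.mul_assoc S.toBlocks₂₂, mul_nonsing_inv _ hS.toBlocks₂₂u, Matrix.one_mul]
    have e2 : S.toBlocks₁₂ * S.toBlocks₂₂⁻¹ * S.toBlocks₂₂ = S.toBlocks₁₂ := by
      rw [Matrix.mul_assoc, nonsing_inv_mul _ hS.toBlocks₂₂u, Matrix.mul_one]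
    rw [h1, Matrix.sub_mul, Matrix.sub_mul, Matrix.mul_sub (L * S.toBlocks₂₂),
      Matrix.mul_sub (S.toBlocks₁₂ * S.toBlocks₂₂⁻¹ * S.toBlocks₂₂), e1, e2, ← Matrix.mul_assoc S.toBlocks₁₂]
    abel
  have hNpsd : ∀ L : Matrix (Fin n) (Fin k) ℝ,
      ((L - S.toBlocks₁₂ * S.toBlocks₂₂⁻¹) * S.toBlocks₂₂ * (L - S.toBlocks₁₂ * S.toBlocks₂₂⁻¹)ᵀ).PosSemidef := by
    intro L
    have := hS.toBlocks₂₂pd.posSemidef.mul_mul_conjTranspose_same (L - S.toBlocks₁₂ * S.toBlocks₂₂⁻¹)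
    rwa [conjTranspose_eq_transpose_of_trivial] at this
  -- collapse L for the optimal H
  have hLstar : S.toBlocks₁₂ * S.toBlocks₂₂⁻¹ * Q0ᵀ * Q0ᵀ⁻¹ = S.toBlocks₁₂ * S.toBlocks₂₂⁻¹ := by
    rw [Matrix.mul_assoc (S.toBlocks₁₂ * S.toBlocks₂₂⁻¹), mul_nonsing_inv _ hQTdet, Matrix.mul_one]
  rw [hLstar, hKgen (S.toBlocks₁₂ * S.toBlocks₂₂⁻¹), sub_self, Matrix.zero_mul, Matrix.zero_mul,
    add_zero] at hval0
  rw [hKgen (H * Q0ᵀ⁻¹)] at hval1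
  -- the termwise inequality
  have hsum : (∑ i, (Real.log ((S.toBlocks₁₁ - S.toBlocks₁₂ * S.toBlocks₂₂⁻¹ * S.toBlocks₂₁) i i)
        + (S.toBlocks₁₁ - S.toBlocks₁₂ * S.toBlocks₂₂⁻¹ * S.toBlocks₂₁) i i / (S.toBlocks₁₁ - S.toBlocks₁₂ * S.toBlocks₂₂⁻¹ * S.toBlocks₂₁) i i))
      ≤ ∑ i, (Real.log (D i i)
        + ((S.toBlocks₁₁ - S.toBlocks₁₂ * S.toBlocks₂₂⁻¹ * S.toBlocks₂₁)
            + (H * Q0ᵀ⁻¹ - S.toBlocks₁₂ * S.toBlocks₂₂⁻¹) * S.toBlocks₂₂ * (H * Q0ᵀ⁻¹ - S.toBlocks₁₂ * S.toBlocks₂₂⁻¹)ᵀ) i i / D i i) := by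
    apply Finset.sum_le_sum
    intro i _
    have hr := stpos i
    have hdd := dpos i
    have hN : 0 ≤ ((H * Q0ᵀ⁻¹ - S.toBlocks₁₂ * S.toBlocks₂₂⁻¹) * S.toBlocks₂₂ * (H * Q0ᵀ⁻¹ - S.toBlocks₁₂ * S.toBlocks₂₂⁻¹)ᵀ) i i :=
      posSemidef_diag_nonneg' (hNpsd _) i
    have hlog := Real.log_le_sub_one_of_pos
      (div_pos hr hdd)
    rw [Real.log_div hr.ne' hdd.ne'] at hlog
    rw [div_self hr.ne', Matrix.add_apply, add_div]
    have hN' : 0 ≤ ((H * Q0ᵀ⁻¹ - S.toBlocks₁₂ * S.toBlocks₂₂⁻¹) * S.toBlocks₂₂ * (H * Q0ᵀ⁻¹ - S.toBlocks₁₂ * S.toBlocks₂₂⁻¹)ᵀ) i i / D i i :=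
      div_nonneg hN hdd.le
    linarith
  -- determinants are positive
  have hdS : (0:ℝ) < S.det := hS.det_pos
  have hd1 : (0:ℝ) < (fromBlocks (H * Hᵀ + D) (H * Q0) (Q0ᵀ * Hᵀ) (Q0ᵀ * Q0)).det := hpos.det_pos
  have hd0 : (0:ℝ) < (fromBlocks ((S.toBlocks₁₂ * S.toBlocks₂₂⁻¹ * Q0ᵀ) * (S.toBlocks₁₂ * S.toBlocks₂₂⁻¹ * Q0ᵀ)ᵀ
        + diagonal fun i => (S.toBlocks₁₁ - S.toBlocks₁₂ * S.toBlocks₂₂⁻¹ * S.toBlocks₂₁) i i)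
      ((S.toBlocks₁₂ * S.toBlocks₂₂⁻¹ * Q0ᵀ) * Q0) (Q0ᵀ * (S.toBlocks₁₂ * S.toBlocks₂₂⁻¹ * Q0ᵀ)ᵀ) (Q0ᵀ * Q0)).det := by
    rw [hdet0]
    exact mul_pos (Finset.prod_pos (fun i _ => stpos i)) hP0.det_pos
  -- finish
  rw [hpart1, show deltaOp (S.toBlocks₁₁ - S.toBlocks₁₂ * S.toBlocks₂₂⁻¹ * S.toBlocks₂₁)
    = diagonal (fun i => (S.toBlocks₁₁ - S.toBlocks₁₂ * S.toBlocks₂₂⁻¹ * S.toBlocks₂₁) i i) from rfl]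
  simp only [Idiv]
  rw [Real.log_div hd0.ne' hdS.ne', Real.log_div hd1.ne' hdS.ne']
  linarith [hval0, hval1, hsum]
end

section
/- Let Σ̂ be an n×n symmetric positive definite matrix, H ∈ ℝ^{n×k}, and D an n×n diagonal positive definite matrix. Then H = (Σ̂ − HHᵀ)·D⁻¹·H if and only if H = Σ̂·(HHᵀ + D)⁻¹·H. -/
open Matrix

theorem stmt_7 (n k : ℕ)
    (Shat : Matrix (Fin n) (Fin n) ℝ) (hShat : Shat.PosDef)
    (H : Matrix (Fin n) (Fin k) ℝ)
    (D : Matrix (Fin n) (Fin n) ℝ) (hDdiag : D.IsDiag) (hDpos : D.PosDef) :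
    H = (Shat - H * Hᵀ) * D⁻¹ * H ↔ H = Shat * (H * Hᵀ + D)⁻¹ * H := by
  have hT : Hᵀ = Hᴴ := by ext i j; simp [conjTranspose_apply]
  have hHHT : (H * Hᵀ).PosSemidef := by
    rw [hT]; exact posSemidef_self_mul_conjTranspose H
  have hMpd : (H * Hᵀ + D).PosDef := Matrix.PosDef.posSemidef_add hHHT hDpos
  have hDinvpd : D⁻¹.PosDef := hDpos.inv
  set S : Matrix (Fin k) (Fin k) ℝ := Hᵀ * D⁻¹ * H + 1 with hSdef
  have hSpsd : (Hᵀ * D⁻¹ * H).PosSemidef := by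
    have := hDinvpd.posSemidef.conjTranspose_mul_mul_same H
    rwa [hT]
  have hSpd : S.PosDef := Matrix.PosDef.posSemidef_add hSpsd Matrix.PosDef.one
  have hMM : (H * Hᵀ + D) * (H * Hᵀ + D)⁻¹ = 1 :=
    mul_nonsing_inv _ hMpd.det_pos.ne'.isUnit
  have hMM' : (H * Hᵀ + D)⁻¹ * (H * Hᵀ + D) = 1 :=
    nonsing_inv_mul _ hMpd.det_pos.ne'.isUnit
  have hDD : D * D⁻¹ = 1 := mul_nonsing_inv _ hDpos.det_pos.ne'.isUnit
  have hSS : S * S⁻¹ = 1 := mul_nonsing_inv _ hSpd.det_pos.ne'.isUnit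
  have h0 : (H * Hᵀ + D) * (D⁻¹ * H) = H * S := by
    rw [hSdef, Matrix.add_mul, Matrix.mul_add, Matrix.mul_one,
      ← Matrix.mul_assoc D, hDD, Matrix.one_mul, Matrix.mul_assoc H Hᵀ,
      ← Matrix.mul_assoc Hᵀ]
  have key : D⁻¹ * H = (H * Hᵀ + D)⁻¹ * H * S := by
    calc D⁻¹ * H = (H * Hᵀ + D)⁻¹ * (H * Hᵀ + D) * (D⁻¹ * H) := by
          rw [hMM', Matrix.one_mul]
    _ = (H * Hᵀ + D)⁻¹ * (H * S) := by rw [Matrix.mul_assoc, h0]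
    _ = (H * Hᵀ + D)⁻¹ * H * S := by rw [Matrix.mul_assoc]
  have e1 : (Shat - H * Hᵀ) * D⁻¹ * H
      = (Shat - (H * Hᵀ + D)) * (D⁻¹ * H) + H := by
    rw [Matrix.mul_assoc, Matrix.sub_mul, Matrix.sub_mul, Matrix.add_mul,
      ← Matrix.mul_assoc D, hDD, Matrix.one_mul]
    abel
  have e2 : Shat * (H * Hᵀ + D)⁻¹ * H
      = (Shat - (H * Hᵀ + D)) * ((H * Hᵀ + D)⁻¹ * H) + H := by
    rw [Matrix.sub_mul, ← Matrix.mul_assoc (H * Hᵀ + D), hMM, Matrix.one_mul,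
      Matrix.mul_assoc, sub_add_cancel]
  have link : (Shat - (H * Hᵀ + D)) * (D⁻¹ * H)
      = (Shat - (H * Hᵀ + D)) * ((H * Hᵀ + D)⁻¹ * H) * S := by
    rw [key, ← Matrix.mul_assoc, Matrix.mul_assoc (Shat - (H * Hᵀ + D))]
  constructor
  · intro h1
    have hx : (Shat - (H * Hᵀ + D)) * (D⁻¹ * H) = 0 := by
      have h := (h1.trans e1).symm
      rwa [add_eq_right] at h
    have hy : (Shat - (H * Hᵀ + D)) * ((H * Hᵀ + D)⁻¹ * H) = 0 := by
      have h5 : (Shat - (H * Hᵀ + D)) * ((H * Hᵀ + D)⁻¹ * H) * S = 0 := by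
        rw [← link]; exact hx
      calc (Shat - (H * Hᵀ + D)) * ((H * Hᵀ + D)⁻¹ * H)
          = (Shat - (H * Hᵀ + D)) * ((H * Hᵀ + D)⁻¹ * H) * S * S⁻¹ := by
            rw [Matrix.mul_assoc _ S, hSS, Matrix.mul_one]
      _ = 0 := by rw [h5, Matrix.zero_mul]
    rw [e2, hy, zero_add]
  · intro h2
    have hy : (Shat - (H * Hᵀ + D)) * ((H * Hᵀ + D)⁻¹ * H) = 0 := by
      have h := (h2.trans e2).symm
      rwa [add_eq_right] at h
    have hx : (Shat - (H * Hᵀ + D)) * (D⁻¹ * H) = 0 := by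
      rw [link, hy, Matrix.zero_mul]
    rw [e1, hx, zero_add]
end

section
/- Let Σ be an m×m symmetric positive definite matrix. Then Δ(Σ) is positive definite and for every m×m diagonal positive definite matrix D one has I(Σ ‖ Δ(Σ)) ≤ I(Σ ‖ D); that is, Δ(Σ) minimizes D ↦ I(Σ ‖ D) over diagonal positive definite matrices. -/
open Matrix

lemma Idiv_diagonal (m : ℕ) (S : Matrix (Fin m) (Fin m) ℝ) (hS : S.PosDef)
    (d : Fin m → ℝ) (hd : ∀ i, 0 < d i) :
    Idiv S (Matrix.diagonal d) = (1/2) * (∑ i, (Real.log (d i) + (d i)⁻¹ * S i i))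
      - (1/2) * Real.log S.det - m/2 := by
  have hinv : (Matrix.diagonal d)⁻¹ = Matrix.diagonal (fun i => (d i)⁻¹) := by
    apply Matrix.inv_eq_right_inv
    rw [Matrix.diagonal_mul_diagonal]
    convert Matrix.diagonal_one with i
    exact mul_inv_cancel₀ (hd i).ne'
  unfold Idiv
  rw [hinv, Matrix.det_diagonal,
    Real.log_div (Finset.prod_pos (fun i _ => hd i)).ne' hS.det_pos.ne',
    Real.log_prod (fun i _ => (hd i).ne')]
  rw [Matrix.trace]
  simp only [Matrix.diag, Matrix.diagonal_mul]
  rw [Finset.sum_add_distrib]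
  simp only [Fintype.card_fin]
  ring


theorem stmt_16 (m : ℕ)
    (S : Matrix (Fin m) (Fin m) ℝ) (hS : S.PosDef) :
    (deltaOp S).PosDef ∧
    ∀ D : Matrix (Fin m) (Fin m) ℝ, D.IsDiag → D.PosDef →
      Idiv S (deltaOp S) ≤ Idiv S D := by
  have hdiag : ∀ i, 0 < S i i := by
    intro i
    have hne : (Pi.single i 1 : Fin m → ℝ) ≠ 0 := by
      intro h
      have := congrFun h i
      simp at this
    have := hS.diag_pos (i := i)
    simpa using this
  have hΔ : (deltaOp S).PosDef := by
    rw [deltaOp, posDef_diagonal_iff]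
    exact hdiag
  refine ⟨hΔ, ?_⟩
  intro D hDdiag hDpos
  have hDeq : Matrix.diagonal D.diag = D := hDdiag.diagonal_diag
  have hd : ∀ i, 0 < D.diag i := by
    rw [← hDeq] at hDpos
    exact posDef_diagonal_iff.mp hDpos
  rw [← hDeq, Idiv_diagonal m S hS _ hd,
    show deltaOp S = Matrix.diagonal (fun i => S i i) from rfl,
    Idiv_diagonal m S hS _ hdiag]
  have hsum : ∑ i, (Real.log (S i i) + (S i i)⁻¹ * S i i)
      ≤ ∑ i, (Real.log (D.diag i) + (D.diag i)⁻¹ * S i i) := by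
    apply Finset.sum_le_sum
    intro i _
    have key := Real.log_le_sub_one_of_pos (x := S i i / D.diag i)
      (div_pos (hdiag i) (hd i))
    rw [Real.log_div (hdiag i).ne' (hd i).ne'] at key
    have h1 : (S i i)⁻¹ * S i i = 1 := inv_mul_cancel₀ (hdiag i).ne'
    have h2 : S i i / D.diag i = (D.diag i)⁻¹ * S i i := by
      rw [div_eq_mul_inv, mul_comm]
    rw [h2] at key
    linarith
  linarith
end
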